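/- arXiv:1512.03503 — 8 statements merged into one kernel-verified Lean document; each statement's English description precedes it below -/
import Mathlib

section
/- Let K be a field, σ a positive integer, M an σ×σ matrix over K, and give V = K^{1×σ} the K[X]-module structure p·e = e·p(M). Then the set of interpolants for (E, M), i.e. vectors p = (p_1,…,p_m) in K[X]^{1×m} with p_1·e_1 + ⋯ + p_m·e_m = 0 for given rows e_1,…,e_m in V, is a free K[X]-submodule of K[X]^{1×m} of rank m. -/
open Polynomial Matrix

/-- the set of interpolants for `(E, M)` is a free `K[X]`-submodule of
`K[X]^{1×m}` of rank `m`, where the `K[X]`-module structure on `K^{1×σ}` is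
`p · e = e · p(M)`. -/
theorem interpolants_form_free_submodule_of_rank
    {K : Type*} [Field K] (σ m : ℕ) (hσ : 0 < σ) (hm : 0 < m)
    (M : Matrix (Fin σ) (Fin σ) K) (E : Fin m → (Fin σ → K)) :
    ∃ I : Submodule (Polynomial K) (Fin m → Polynomial K),
      (∀ p : Fin m → Polynomial K,
        p ∈ I ↔ ∑ i, Matrix.vecMul (E i) (Polynomial.aeval M (p i)) = 0) ∧
      Module.Free (Polynomial K) I ∧
      Module.rank (Polynomial K) I = m := by
  classical
  set χ : Polynomial K := M.charpoly with hχdef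
  have hχ0 : χ ≠ 0 := M.charpoly_monic.ne_zero
  have hχM : Polynomial.aeval M χ = 0 := M.aeval_self_charpoly
  set φ : (Fin m → Polynomial K) → (Fin σ → K) :=
    fun p => ∑ i, Matrix.vecMul (E i) (Polynomial.aeval M (p i)) with hφdef
  have hsmul : ∀ (c : Polynomial K) (p : Fin m → Polynomial K),
      φ (c • p) = Matrix.vecMul (φ p) (Polynomial.aeval M c) := by
    intro c p
    have h1 : ∀ i : Fin m, Matrix.vecMul (E i) (Polynomial.aeval M ((c • p) i)) =
        (Polynomial.aeval M c).vecMulLinear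
          (Matrix.vecMul (E i) (Polynomial.aeval M (p i))) := by
      intro i
      rw [Matrix.vecMulLinear_apply, Pi.smul_apply, smul_eq_mul, mul_comm, _root_.map_mul,
        ← Matrix.vecMul_vecMul]
    simp only [hφdef, h1]
    rw [← map_sum, Matrix.vecMulLinear_apply]
  let I : Submodule (Polynomial K) (Fin m → Polynomial K) :=
  { carrier := {p | φ p = 0}
    add_mem' := by
      intro p q hp hq
      have : φ (p + q) = φ p + φ q := by
        simp only [hφdef, Pi.add_apply, map_add, Matrix.vecMul_add]
        exact Finset.sum_add_distrib
      simp only [Set.mem_setOf_eq] at *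
      rw [this, hp, hq, add_zero]
    zero_mem' := by
      simp only [Set.mem_setOf_eq, hφdef, Pi.zero_apply, map_zero, Matrix.vecMul_zero,
        Finset.sum_const_zero]
    smul_mem' := by
      intro c p hp
      simp only [Set.mem_setOf_eq] at *
      rw [hsmul, hp, Matrix.zero_vecMul] }
  have hmem : ∀ p : Fin m → Polynomial K, p ∈ I ↔ φ p = 0 := fun p => Iff.rfl
  -- the elements χ • (standard basis) belong to I
  have hbasis_mem : ∀ j : Fin m, (χ • (Pi.single j 1 : Fin m → Polynomial K)) ∈ I := by
    intro j
    rw [hmem]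
    have h1 : ∀ i : Fin m, Matrix.vecMul (E i)
        (Polynomial.aeval M ((χ • (Pi.single j 1 : Fin m → Polynomial K)) i)) = 0 := by
      intro i
      rcases eq_or_ne i j with rfl | hij
      · simp [hχM]
      · simp [Pi.single_eq_of_ne hij]
    simp only [hφdef, h1, Finset.sum_const_zero]
  -- a linearly independent family of size m inside I
  have hli : LinearIndependent (Polynomial K)
      (fun j : Fin m => (χ • (Pi.single j 1 : Fin m → Polynomial K) : Fin m → Polynomial K)) := by
    have hinj : Function.Injective
        (LinearMap.lsmul (Polynomial K) (Fin m → Polynomial K) χ) :=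
      smul_right_injective _ hχ0
    have := (Pi.basisFun (Polynomial K) (Fin m)).linearIndependent.map'
      (LinearMap.lsmul (Polynomial K) (Fin m → Polynomial K) χ)
      (LinearMap.ker_eq_bot.mpr hinj)
    simpa [Function.comp_def] using this
  have hliI : LinearIndependent (Polynomial K)
      (fun j : Fin m => (⟨χ • (Pi.single j 1 : Fin m → Polynomial K), hbasis_mem j⟩ : I)) := by
    apply LinearIndependent.of_comp I.subtype
    simpa [Function.comp_def] using hli
  have hrank_le : Module.rank (Polynomial K) I ≤ m := by
    have := Submodule.rank_le I
    rwa [rank_fin_fun] at this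
  have hrank_ge : (m : Cardinal) ≤ Module.rank (Polynomial K) I := by
    simpa using hliI.cardinal_lift_le_rank
  refine ⟨I, hmem, inferInstance, le_antisymm hrank_le hrank_ge⟩
end

section
/- Let p = (p_1,…,p_m) ∈ K[X]^{1×m} be a nonzero row vector with deg p_c ≤ δ for all c, and let s ∈ ℕ^m. Let φ be the priority indexing of pairs (c,d) ∈ {1,…,m}×{0,…,δ} sorting by (s_c + d, c) lexicographically. Then φ(c,d) is the column index of the rightmost nonzero coefficient in the s-permuted expansion of p if and only if p has s-pivot index c and s-pivot degree deg(p_c) = d. -/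
open Polynomial Matrix

/-- Priority comparison on pairs `(c,d)`: lexicographic on `(s_c + d, c)`. -/
def keyLt {m : ℕ} (s : Fin m → ℕ) (x y : Fin m × ℕ) : Prop :=
  s x.1 + x.2 < s y.1 + y.2 ∨ (s x.1 + x.2 = s y.1 + y.2 ∧ x.1 < y.1)

open scoped Classical in
/-- The priority index `φ(c,d)`: the position (number of strictly smaller pairs among
`{1,…,m} × {0,…,δ}`) of `(c,d)` in the sorting by increasing `s_c + d`, ties broken by
increasing `c`. -/
noncomputable def phiIdx {m : ℕ} (s : Fin m → ℕ) (δ : ℕ) (x : Fin m × ℕ) : ℕ :=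
  (Finset.univ.filter fun y : Fin m × Fin (δ + 1) => keyLt s (y.1, (y.2 : ℕ)) x).card

lemma keyLt_trans {m : ℕ} (s : Fin m → ℕ) {a b c : Fin m × ℕ}
    (h1 : keyLt s a b) (h2 : keyLt s b c) : keyLt s a c := by
  rcases h1 with h1 | ⟨h1, h1'⟩ <;> rcases h2 with h2 | ⟨h2, h2'⟩
  · exact Or.inl (h1.trans h2)
  · exact Or.inl (h2 ▸ h1)
  · exact Or.inl (h1 ▸ h2)
  · exact Or.inr ⟨h1.trans h2, h1'.trans h2'⟩

lemma keyLt_irrefl {m : ℕ} (s : Fin m → ℕ) (a : Fin m × ℕ) : ¬ keyLt s a a := by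
  simp [keyLt]

lemma keyLt_total {m : ℕ} (s : Fin m → ℕ) {x y : Fin m × ℕ}
    (h : ¬ keyLt s y x) : keyLt s x y ∨ x = y := by
  unfold keyLt at *
  push_neg at h
  rcases eq_or_lt_of_le h.1 with hk | hk
  · have hc := h.2 hk.symm
    rcases eq_or_lt_of_le hc with hc | hc
    · right
      have hs := congrArg s hc
      exact Prod.ext hc (by omega)
    · exact Or.inl (Or.inr ⟨hk, hc⟩)
  · exact Or.inl (Or.inl hk)

lemma phiIdx_le_iff {m δ : ℕ} (s : Fin m → ℕ) (x y : Fin m × ℕ)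
    (hy : y.2 ≤ δ) :
    phiIdx s δ x ≤ phiIdx s δ y ↔ ¬ keyLt s y x := by
  classical
  unfold phiIdx
  constructor
  · intro hle hlt
    have hsub : (Finset.univ.filter fun z : Fin m × Fin (δ + 1) => keyLt s (z.1, (z.2 : ℕ)) y)
        ⊆ (Finset.univ.filter fun z : Fin m × Fin (δ + 1) => keyLt s (z.1, (z.2 : ℕ)) x) := by
      intro z hz
      simp only [Finset.mem_filter, Finset.mem_univ, true_and] at hz ⊢
      exact keyLt_trans s hz hlt
    have hmem : (y.1, (⟨y.2, by omega⟩ : Fin (δ + 1))) ∈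
        (Finset.univ.filter fun z : Fin m × Fin (δ + 1) => keyLt s (z.1, (z.2 : ℕ)) x) := by
      simp only [Finset.mem_filter, Finset.mem_univ, true_and]
      exact hlt
    have hnmem : (y.1, (⟨y.2, by omega⟩ : Fin (δ + 1))) ∉
        (Finset.univ.filter fun z : Fin m × Fin (δ + 1) => keyLt s (z.1, (z.2 : ℕ)) y) := by
      simp only [Finset.mem_filter, Finset.mem_univ, true_and]
      exact keyLt_irrefl s y
    have := Finset.card_lt_card (Finset.ssubset_iff_of_subset hsub |>.mpr ⟨_, hmem, hnmem⟩)
    omega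
  · intro h
    apply Finset.card_le_card
    intro z hz
    simp only [Finset.mem_filter, Finset.mem_univ, true_and] at hz ⊢
    rcases keyLt_total s h with h' | h'
    · exact keyLt_trans s hz h'
    · exact h' ▸ hz

/-- The `s`-row degree of a row vector `p`. -/
noncomputable def rowDegVec {K : Type*} [Field K] {m : ℕ} (s : Fin m → ℕ)
    (p : Fin m → Polynomial K) : WithBot ℕ :=
  Finset.univ.sup fun j => (p j).degree + (s j : WithBot ℕ)

/-- `c` is the `s`-pivot index of `p`: the largest column index such that
`deg p_c + s_c` equals the `s`-row degree of `p`. -/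
noncomputable def IsPivotIdx {K : Type*} [Field K] {m : ℕ} (s : Fin m → ℕ)
    (p : Fin m → Polynomial K) (c : Fin m) : Prop :=
  ((p c).degree + (s c : WithBot ℕ) = rowDegVec s p) ∧
    ∀ c', ((p c').degree + (s c' : WithBot ℕ) = rowDegVec s p) → c' ≤ c

/-- for a nonzero `p` with all entries of degree at most `δ`, position
`φ(c,d)` carries the rightmost nonzero coefficient of the `s`-permuted expansion of `p`
iff `p` has `s`-pivot index `c` and `s`-pivot degree `deg p_c = d`. -/
theorem phi_rightmost_nonzero_iff_pivot
    {K : Type*} [Field K] {m δ : ℕ} (s : Fin m → ℕ)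
    (p : Fin m → Polynomial K) (hp : p ≠ 0)
    (hdeg : ∀ c, (p c).degree ≤ (δ : WithBot ℕ)) (c : Fin m) (d : ℕ) (hd : d ≤ δ) :
    ((p c).coeff d ≠ 0 ∧
      ∀ (c' : Fin m) (d' : ℕ), d' ≤ δ → (p c').coeff d' ≠ 0 →
        phiIdx s δ (c', d') ≤ phiIdx s δ (c, d))
    ↔ (IsPivotIdx s p c ∧ (p c).natDegree = d) := by
  classical
  constructor
  · rintro ⟨h1, h2⟩
    have hpc : p c ≠ 0 := fun h => h1 (by simp [h])
    have hdn : d ≤ (p c).natDegree := le_natDegree_of_ne_zero h1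
    have hnδ : (p c).natDegree ≤ δ := natDegree_le_iff_degree_le.mpr (hdeg c)
    have h2' : ∀ c' d', d' ≤ δ → (p c').coeff d' ≠ 0 → ¬ keyLt s (c, d) (c', d') :=
      fun c' d' hδ' hne => (phiIdx_le_iff s (c', d') (c, d) hd).mp (h2 c' d' hδ' hne)
    have hnd : (p c).natDegree = d := by
      have hk := h2' c (p c).natDegree hnδ
        (by rw [coeff_natDegree]; exact leadingCoeff_ne_zero.mpr hpc)
      simp only [keyLt] at hk
      push_neg at hk
      have := hk.1
      omega
    have hdegc : (p c).degree = ((p c).natDegree : WithBot ℕ) := degree_eq_natDegree hpc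
    have hrow : rowDegVec s p = (p c).degree + (s c : WithBot ℕ) := by
      apply le_antisymm
      · apply Finset.sup_le
        intro j _
        by_cases hj : p j = 0
        · simp [hj]
        · have hjd : (p j).degree = ((p j).natDegree : WithBot ℕ) := degree_eq_natDegree hj
          have hk := h2' j (p j).natDegree (natDegree_le_iff_degree_le.mpr (hdeg j))
            (by rw [coeff_natDegree]; exact leadingCoeff_ne_zero.mpr hj)
          simp only [keyLt] at hk
          push_neg at hk
          have hle : s j + (p j).natDegree ≤ s c + d := hk.1
          rw [hjd, hdegc]
          exact_mod_cast (by omega : (p j).natDegree + s j ≤ (p c).natDegree + s c)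
      · unfold rowDegVec
        exact Finset.le_sup (f := fun j => (p j).degree + (s j : WithBot ℕ)) (Finset.mem_univ c)
    refine ⟨⟨hrow.symm, ?_⟩, hnd⟩
    intro c' hc'
    have hrowne : rowDegVec s p ≠ ⊥ := by
      rw [hrow, hdegc]
      exact_mod_cast (WithBot.coe_ne_bot (a := (p c).natDegree + s c))
    have hpc' : p c' ≠ 0 := by
      intro h0
      apply hrowne
      rw [← hc', h0]
      simp
    have heq : ((p c').natDegree : WithBot ℕ) + (s c' : WithBot ℕ)
        = ((p c).natDegree : WithBot ℕ) + (s c : WithBot ℕ) := by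
      rw [← degree_eq_natDegree hpc', ← hdegc, hc', hrow]
    have hnat : (p c').natDegree + s c' = (p c).natDegree + s c := by exact_mod_cast heq
    have hk := h2' c' (p c').natDegree (natDegree_le_iff_degree_le.mpr (hdeg c'))
      (by rw [coeff_natDegree]; exact leadingCoeff_ne_zero.mpr hpc')
    simp only [keyLt] at hk
    push_neg at hk
    exact hk.2 (by omega)
  · rintro ⟨⟨hceq, hmax⟩, hdn⟩
    obtain ⟨j, hj⟩ : ∃ j, p j ≠ 0 := by
      by_contra h
      push_neg at h
      exact hp (funext h)
    have hrowne : rowDegVec s p ≠ ⊥ := by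
      intro hb
      have h' : (p j).degree + (s j : WithBot ℕ) ≤ rowDegVec s p := by
        unfold rowDegVec
        exact Finset.le_sup (f := fun j => (p j).degree + (s j : WithBot ℕ)) (Finset.mem_univ j)
      rw [hb, le_bot_iff] at h'
      rcases WithBot.add_eq_bot.mp h' with h'' | h''
      · exact hj (degree_eq_bot.mp h'')
      · exact WithBot.coe_ne_bot h''
    have hpc : p c ≠ 0 := by
      intro h0
      apply hrowne
      rw [← hceq, h0]
      simp
    have h1 : (p c).coeff d ≠ 0 := by
      rw [← hdn, coeff_natDegree]
      exact leadingCoeff_ne_zero.mpr hpc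
    refine ⟨h1, ?_⟩
    intro c' d' hδ' hne'
    rw [phiIdx_le_iff s _ _ hd]
    have hpc' : p c' ≠ 0 := fun h0 => hne' (by simp [h0])
    have hd'n : d' ≤ (p c').natDegree := le_natDegree_of_ne_zero hne'
    have hle : (p c').degree + (s c' : WithBot ℕ) ≤ rowDegVec s p := by
      unfold rowDegVec
      exact Finset.le_sup (f := fun j => (p j).degree + (s j : WithBot ℕ)) (Finset.mem_univ c')
    rw [← hceq, degree_eq_natDegree hpc', degree_eq_natDegree hpc] at hle
    have hnat : (p c').natDegree + s c' ≤ (p c).natDegree + s c := by exact_mod_cast hle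
    intro hkey
    simp only [keyLt] at hkey
    rcases hkey with hlt | ⟨heq, hlt⟩
    · omega
    · have hd'eq : (p c').natDegree = d' := by omega
      have hceq' : (p c').degree + (s c' : WithBot ℕ) = rowDegVec s p := by
        rw [← hceq, degree_eq_natDegree hpc', degree_eq_natDegree hpc, hd'eq]
        exact_mod_cast (by omega : d' + s c' = (p c).natDegree + s c)
      exact absurd hlt (not_lt.mpr (hmax c' hceq'))
end

section
/- Let E ∈ K^{m×σ}, M ∈ K^{σ×σ}, s ∈ ℕ^m, and let (δ_1,…,δ_m) be the s-minimal degree of (E,M). Then δ_1 + ⋯ + δ_m equals the rank of the Krylov matrix obtained by stacking E, EM, …, EM^δ (for δ at least the degree of the minimal polynomial of M). -/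
open Polynomial Matrix

/-- Row `(c,d)` of the priority-permuted Krylov matrix is a linear combination of the
earlier rows. -/
def DepEarlier {K : Type*} [Field K] {m σ : ℕ} (E : Matrix (Fin m) (Fin σ) K)
    (M : Matrix (Fin σ) (Fin σ) K) (s : Fin m → ℕ) (δ : ℕ) (c : Fin m) (d : ℕ) : Prop :=
  Matrix.vecMul (E c) (M ^ d) ∈
    Submodule.span K
      ((fun y : Fin m × ℕ => Matrix.vecMul (E y.1) (M ^ y.2)) ''
        {y | y.2 ≤ δ ∧ keyLt s y (c, d)})

/-- `dm` is the `s`-minimal degree of `(E,M)`. -/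
def IsMinDeg {K : Type*} [Field K] {m σ : ℕ} (E : Matrix (Fin m) (Fin σ) K)
    (M : Matrix (Fin σ) (Fin σ) K) (s : Fin m → ℕ) (δ : ℕ) (dm : Fin m → ℕ) : Prop :=
  ∀ c, DepEarlier E M s δ c (dm c) ∧ ∀ d, d < dm c → ¬ DepEarlier E M s δ c d

/-!
Order the rows `(c, d)` of the Krylov matrix by priority. Multiplying the dependency of row
`(c, δ_c)` on its predecessors by `M ^ e` shows that every row `(c, δ_c + e)` depends on its
predecessors too, so by induction along the priority order the rows `(c, d)` with `d < δ_c`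
span all rows. Each of them is, by minimality of `δ_c`, independent of its predecessors, so
they are linearly independent; there are `δ_1 + ⋯ + δ_m` of them. They are rows of the
Krylov matrix up to degree `δ` because `δ_c ≤ δ`: the row `(c, δ)` depends on the rows
`(c, i)` with `i < deg minpoly M`, `M ^ δ` being a combination of these lower powers.
-/

section Triangular

open Submodule Set

variable {R K V ι : Type*}

theorem mem_span_image_of_forall_mem_span_image_lt [Semiring R] [AddCommMonoid V] [Module R V]
    (f : ι → ℕ) (v : ι → V) (B : Set ι)
    (h : ∀ x ∉ B, v x ∈ span R (v '' {y | f y < f x})) (x : ι) :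
    v x ∈ span R (v '' B) := by
  induction hx : f x using Nat.strong_induction_on generalizing x with
  | _ n ih =>
    by_cases hxB : x ∈ B
    · exact subset_span (mem_image_of_mem v hxB)
    · refine span_le.2 ?_ (h x hxB)
      rintro _ ⟨y, hy, rfl⟩
      exact ih (f y) (hx ▸ hy) y rfl

theorem linearIndependent_of_notMem_span_image_lt [DivisionRing K] [AddCommGroup V] [Module K V]
    (f : ι → ℕ) (hf : Function.Injective f) (v : ι → V)
    (h : ∀ i, v i ∉ span K (v '' {j | f j < f i})) : LinearIndependent K v := by
  have hlt : ∀ n, LinearIndepOn K v {i | f i < n} := by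
    intro n
    induction n with
    | zero => simp
    | succ n ih =>
      by_cases hn : ∃ i, f i = n
      · obtain ⟨i, rfl⟩ := hn
        have hset : {j | f j < f i + 1} = insert i {j | f j < f i} := by
          ext j
          simp only [mem_ofPred_eq, mem_insert_iff, Nat.lt_succ_iff_lt_or_eq,
            ← hf.eq_iff (a := j)]
          tauto
        rw [hset, linearIndepOn_insert (s := {j | f j < f i}) (lt_irrefl (f i))]
        exact ⟨ih, h i⟩
      · push Not at hn
        have hset : {j | f j < n + 1} = {j | f j < n} := by
          ext j
          have := hn j
          simp only [mem_ofPred_eq]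
          omega
        rwa [hset]
  have hunion : (⋃ n, {i | f i < n}) = univ :=
    eq_univ_of_forall fun i => mem_iUnion.2 ⟨f i + 1, Nat.lt_succ_self _⟩
  rw [← linearIndepOn_univ_iff, ← hunion]
  exact linearIndepOn_iUnion_of_directed
    (Monotone.directed_le fun _ _ hab _ hj => lt_of_lt_of_le hj hab) hlt

end Triangular

theorem pow_mem_span_pow_lt_natDegree_minpoly {K A : Type*} [Field K] [Ring A] [Algebra K A]
    {x : A} (hx : IsIntegral K x) (n : ℕ) :
    x ^ n ∈ Submodule.span K ((x ^ ·) '' Set.Iio (minpoly K x).natDegree) := by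
  classical
  have hr : X ^ n %ₘ minpoly K x ∈ degreeLT K (minpoly K x).natDegree := by
    rw [mem_degreeLT, ← degree_eq_natDegree (minpoly.ne_zero hx)]
    exact degree_modByMonic_lt _ (minpoly.monic hx)
  rw [degreeLT_eq_span_X_pow] at hr
  have := Submodule.apply_mem_span_image_of_mem_span (aeval x).toLinearMap hr
  rw [AlgHom.toLinearMap_apply, aeval_modByMonic_eq_self_of_root (minpoly.aeval K x)] at this
  simpa [Set.image_image] using this

theorem Nat.mul_add_lt_mul_add_iff {a b i j n : ℕ} (hi : i < n) (hj : j < n) :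
    a * n + i < b * n + j ↔ a < b ∨ a = b ∧ i < j := by
  rcases lt_trichotomy a b with h | rfl | h
  · have : a * n + n ≤ b * n := by simpa [add_mul] using Nat.mul_le_mul_right n h
    omega
  · omega
  · have : b * n + n ≤ a * n := by simpa [add_mul] using Nat.mul_le_mul_right n h
    omega

def Matrix.vecMulLeftLinear {R n o : Type*} [CommSemiring R] [Fintype n] (u : n → R) :
    Matrix n o R →ₗ[R] o → R where
  toFun A := u ᵥ* A
  map_add' A B := vecMul_add A B u
  map_smul' c A := vecMul_smul u c A

section Krylov

open Submodule

variable {K : Type*} [Field K] {m σ : ℕ}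

def keyRank (s : Fin m → ℕ) (x : Fin m × ℕ) : ℕ := (s x.1 + x.2) * m + x.1

theorem keyLt_iff_keyRank_lt {s : Fin m → ℕ} {x y : Fin m × ℕ} :
    keyLt s x y ↔ keyRank s x < keyRank s y := by
  rw [keyLt, keyRank, keyRank, Nat.mul_add_lt_mul_add_iff x.1.isLt y.1.isLt, Fin.lt_def]

theorem keyRank_injective (s : Fin m → ℕ) : Function.Injective (keyRank s) := by
  intro x y hxy
  have hxy' : ¬ keyLt s x y := by rw [keyLt_iff_keyRank_lt, hxy]; exact lt_irrefl _
  have hyx : ¬ keyLt s y x := by rw [keyLt_iff_keyRank_lt, hxy]; exact lt_irrefl _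
  unfold keyLt at hxy' hyx
  have hc : x.1 = y.1 := by omega
  exact Prod.ext hc (by rw [hc] at hxy' hyx; omega)

theorem keyLt.add_right {s : Fin m → ℕ} {x y : Fin m × ℕ} (h : keyLt s x y) (e : ℕ) :
    keyLt s (x.1, x.2 + e) (y.1, y.2 + e) := by
  unfold keyLt at h ⊢
  dsimp only
  omega

def krylovRow (E : Matrix (Fin m) (Fin σ) K) (M : Matrix (Fin σ) (Fin σ) K) (x : Fin m × ℕ) :
    Fin σ → K :=
  E x.1 ᵥ* M ^ x.2

def krylovMatrix (E : Matrix (Fin m) (Fin σ) K) (M : Matrix (Fin σ) (Fin σ) K) (δ : ℕ) :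
    Matrix (Fin m × Fin (δ + 1)) (Fin σ) K :=
  Matrix.of fun x => krylovRow E M (x.1, x.2)

def krylovBasisIndex (dm : Fin m → ℕ) (i : Σ c, Fin (dm c)) : Fin m × ℕ := (i.1, i.2)

theorem krylovBasisIndex_injective (dm : Fin m → ℕ) :
    Function.Injective (krylovBasisIndex dm) := by
  rintro ⟨c, i⟩ ⟨c', i'⟩ h
  obtain ⟨rfl, h⟩ := Prod.mk.inj h
  exact congrArg (Sigma.mk c) (Fin.ext h)

theorem range_krylovBasisIndex (dm : Fin m → ℕ) :
    Set.range (krylovBasisIndex dm) = {y | y.2 < dm y.1} := by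
  ext ⟨c, d⟩
  refine ⟨?_, fun h => ⟨⟨c, d, h⟩, rfl⟩⟩
  rintro ⟨⟨c, i⟩, h⟩
  obtain ⟨rfl, rfl⟩ := Prod.mk.inj h
  exact i.isLt

variable (E : Matrix (Fin m) (Fin σ) K) (M : Matrix (Fin σ) (Fin σ) K)

theorem krylovRow_add (c : Fin m) (d e : ℕ) :
    krylovRow E M (c, d + e) = krylovRow E M (c, d) ᵥ* M ^ e := by
  rw [krylovRow, krylovRow, vecMul_vecMul, pow_add]

theorem depEarlier_self_of_natDegree_minpoly_le (s : Fin m → ℕ) {δ : ℕ}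
    (hδ : (minpoly K M).natDegree ≤ δ) (c : Fin m) : DepEarlier E M s δ c δ := by
  have hpow := pow_mem_span_pow_lt_natDegree_minpoly (IsIntegral.of_finite K M) δ
  refine span_mono ?_ (apply_mem_span_image_of_mem_span (vecMulLeftLinear (E c)) hpow)
  rintro _ ⟨_, ⟨i, hi, rfl⟩, rfl⟩
  have hiδ : i < δ := hi.trans_le hδ
  exact ⟨(c, i), ⟨hiδ.le, Or.inl (Nat.add_lt_add_left hiδ _)⟩, rfl⟩

variable {E M} {s : Fin m → ℕ} {δ : ℕ} {dm : Fin m → ℕ}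

theorem IsMinDeg.le_of_natDegree_minpoly_le (hdm : IsMinDeg E M s δ dm)
    (hδ : (minpoly K M).natDegree ≤ δ) (c : Fin m) :
    dm c ≤ δ := by
  by_contra! h
  exact (hdm c).2 δ h (depEarlier_self_of_natDegree_minpoly_le E M s hδ c)

theorem IsMinDeg.krylovRow_mem_span_keyRank_lt (hdm : IsMinDeg E M s δ dm) {c : Fin m} {d : ℕ}
    (hd : dm c ≤ d) :
    krylovRow E M (c, d) ∈ span K (krylovRow E M '' {y | keyRank s y < keyRank s (c, d)}) := by
  obtain ⟨e, rfl⟩ := Nat.exists_eq_add_of_le hd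
  have hshift := apply_mem_span_image_of_mem_span (vecMulLinear (M ^ e)) (hdm c).1
  rw [krylovRow_add]
  refine span_mono ?_ hshift
  rintro _ ⟨_, ⟨y, ⟨-, hy⟩, rfl⟩, rfl⟩
  exact ⟨(y.1, y.2 + e), keyLt_iff_keyRank_lt.1 (hy.add_right e), krylovRow_add E M y.1 y.2 e⟩

theorem IsMinDeg.krylovRow_mem_span_basis (hdm : IsMinDeg E M s δ dm) (x : Fin m × ℕ) :
    krylovRow E M x ∈ span K (krylovRow E M '' {y | y.2 < dm y.1}) :=
  mem_span_image_of_forall_mem_span_image_lt (keyRank s) _ _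
    (fun _ hx => hdm.krylovRow_mem_span_keyRank_lt (not_lt.1 hx)) x

theorem IsMinDeg.linearIndependent (hdm : IsMinDeg E M s δ dm) (hle : ∀ c, dm c ≤ δ) :
    LinearIndependent K (krylovRow E M ∘ krylovBasisIndex dm) := by
  refine linearIndependent_of_notMem_span_image_lt (keyRank s ∘ krylovBasisIndex dm)
    ((keyRank_injective s).comp (krylovBasisIndex_injective dm)) _
    fun i hi => (hdm i.1).2 i.2 i.2.isLt (span_mono ?_ hi)
  rintro _ ⟨j, hj, rfl⟩
  exact ⟨krylovBasisIndex dm j, ⟨j.2.isLt.le.trans (hle j.1), keyLt_iff_keyRank_lt.2 hj⟩,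
    rfl⟩

theorem IsMinDeg.span_row_krylovMatrix (hdm : IsMinDeg E M s δ dm) (hle : ∀ c, dm c ≤ δ) :
    span K (Set.range (krylovMatrix E M δ).row) =
      span K (Set.range (krylovRow E M ∘ krylovBasisIndex dm)) := by
  rw [Set.range_comp, range_krylovBasisIndex]
  refine le_antisymm (span_le.2 ?_) (span_mono ?_)
  · rintro _ ⟨x, rfl⟩
    exact hdm.krylovRow_mem_span_basis (x.1, x.2)
  · rintro _ ⟨y, hy, rfl⟩
    exact ⟨(y.1, ⟨y.2, Nat.lt_succ_of_le (hy.le.trans (hle y.1))⟩), rfl⟩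

end Krylov

/-- `δ_1 + ⋯ + δ_m` equals the rank of the Krylov matrix stacking
`E, EM, …, EM^δ`, for `δ` at least the degree of the minimal polynomial of `M`. -/
theorem sum_minimal_degree_eq_krylov_rank
    {K : Type*} [Field K] {m σ δ : ℕ}
    (M : Matrix (Fin σ) (Fin σ) K) (E : Matrix (Fin m) (Fin σ) K) (s : Fin m → ℕ)
    (hδ : (minpoly K M).natDegree ≤ δ)
    (dm : Fin m → ℕ) (hdm : IsMinDeg E M s δ dm) :
    ∑ c, dm c =
      (Matrix.of fun (x : Fin m × Fin (δ + 1)) (j : Fin σ) =>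
        Matrix.vecMul (E x.1) (M ^ (x.2 : ℕ)) j).rank := by
  have hle : ∀ c, dm c ≤ δ := hdm.le_of_natDegree_minpoly_le hδ
  change _ = (krylovMatrix E M δ).rank
  rw [rank_eq_finrank_span_row, hdm.span_row_krylovMatrix hle,
    finrank_span_eq_card (hdm.linearIndependent hle), Fintype.card_sigma]
  simp
end

section
/- Let E ∈ K^{m×σ}, M ∈ K^{σ×σ}, s ∈ ℕ^m. For any s-minimal interpolation basis P ∈ K[X]^{m×m} for (E,M), the sum of the s-row degrees of P is at most σ + (s_1 + ⋯ + s_m). -/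
open Polynomial Matrix

/-- The `s`-row degree of row `i` of `P`. -/
noncomputable def rowDegW {K : Type*} [Field K] {k m : ℕ} (s : Fin m → ℕ)
    (P : Matrix (Fin k) (Fin m) (Polynomial K)) (i : Fin k) : WithBot ℕ :=
  Finset.univ.sup fun j => (P i j).degree + (s j : WithBot ℕ)

/-- The `s`-leading matrix of `P`. -/
noncomputable def leadMat {K : Type*} [Field K] {k m : ℕ} (s : Fin m → ℕ)
    (P : Matrix (Fin k) (Fin m) (Polynomial K)) : Matrix (Fin k) (Fin m) K :=
  fun i j =>
    if (P i j).degree + (s j : WithBot ℕ) = rowDegW s P i then (P i j).leadingCoeff else 0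

/-- `P` is `s`-reduced. -/
def IsReducedS {K : Type*} [Field K] {k m : ℕ} (s : Fin m → ℕ)
    (P : Matrix (Fin k) (Fin m) (Polynomial K)) : Prop :=
  (leadMat s P).rank = k

/-- `p` is an interpolant for `(E,M)`. -/
def IsInterpolant {K : Type*} [Field K] {m σ : ℕ} (E : Matrix (Fin m) (Fin σ) K)
    (M : Matrix (Fin σ) (Fin σ) K) (p : Fin m → Polynomial K) : Prop :=
  ∑ c, Matrix.vecMul (E c) (Polynomial.aeval M (p c)) = 0

/-- The rows of `P` form a basis of the `K[X]`-module of interpolants for `(E,M)`. -/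
def IsInterpBasis {K : Type*} [Field K] {m σ : ℕ} (E : Matrix (Fin m) (Fin σ) K)
    (M : Matrix (Fin σ) (Fin σ) K) (P : Matrix (Fin m) (Fin m) (Polynomial K)) : Prop :=
  LinearIndependent (Polynomial K) (fun i => P i) ∧
    ∀ q : Fin m → Polynomial K,
      IsInterpolant E M q ↔ q ∈ Submodule.span (Polynomial K) (Set.range fun i => P i)

/-!
Fix `t` larger than all row degrees `dᵢ` and shifts `sⱼ`. The vectors of `s`-degree at most `t`
form a `K`-space of dimension `Σⱼ (t + 1 - sⱼ)`, and evaluation at `(E, M)` maps it to `K^σ`, so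
its interpolants have dimension at least `Σⱼ (t + 1 - sⱼ) - σ`. By the predictable degree
property of the `s`-reduced basis `P`, every such interpolant is `λ P` with `deg λᵢ + dᵢ ≤ t`,
a space of dimension `Σᵢ (t + 1 - dᵢ)`. Comparing the two counts gives `Σ dᵢ ≤ σ + Σ sⱼ`.
-/

section RowDegree

variable {K : Type*} [Field K] {k m : ℕ} {s : Fin m → ℕ} {P : Matrix (Fin k) (Fin m) K[X]}

variable (s P) in
theorem degree_add_le_rowDegW (i : Fin k) (j : Fin m) :
    (P i j).degree + s j ≤ rowDegW s P i :=
  Finset.le_sup (f := fun j => (P i j).degree + (s j : WithBot ℕ)) (Finset.mem_univ j)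

theorem natDegree_add_le_of_rowDegW_eq {i : Fin k} {d : ℕ} (hd : rowDegW s P i = d) (j : Fin m)
    (hP : P i j ≠ 0) : (P i j).natDegree + s j ≤ d := by
  have h := degree_add_le_rowDegW s P i j
  rw [hd, degree_eq_natDegree hP] at h
  exact_mod_cast h

theorem leadMat_apply_eq_coeff {i : Fin k} {d : ℕ} (hd : rowDegW s P i = d) (j : Fin m) :
    leadMat s P i j = (P i j).coeff (d - s j) := by
  by_cases hP : P i j = 0
  · simp [leadMat, hP]
  have hle := natDegree_add_le_of_rowDegW_eq hd j hP
  rw [leadMat, hd, degree_eq_natDegree hP]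
  norm_cast
  split_ifs with heq
  · rw [leadingCoeff, ← heq, Nat.add_sub_cancel]
  · exact (coeff_eq_zero_of_natDegree_lt (by omega)).symm

theorem IsReducedS.linearIndependent_row (hred : IsReducedS s P) :
    LinearIndependent K (leadMat s P).row := by
  rw [linearIndependent_iff_card_eq_finrank_span, Fintype.card_fin, Set.finrank]
  rw [IsReducedS, Matrix.rank_eq_finrank_span_row] at hred
  exact hred.symm

theorem IsReducedS.exists_rowDegW_eq (hred : IsReducedS s P) (i : Fin k) :
    ∃ d : ℕ, rowDegW s P i = d := by
  obtain ⟨j, hj⟩ := Function.ne_iff.mp (hred.linearIndependent_row.ne_zero i)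
  have hdeg : (P i j).degree + s j = rowDegW s P i := by
    by_contra h
    exact hj (by simp [Matrix.row, leadMat, h])
  have hP : P i j ≠ 0 := fun h => hj (by simp [Matrix.row, leadMat, h])
  exact ⟨(P i j).natDegree + s j, by rw [← hdeg, degree_eq_natDegree hP]; rfl⟩

/-- When `D` bounds every `deg λᵢ + dᵢ`, only leading terms reach degree `D - sⱼ` in `(λ P)ⱼ`. -/
theorem coeff_vecMul_eq_vecMul_leadMat {d : Fin k → ℕ} (hd : ∀ i, rowDegW s P i = d i)
    {lam : Fin k → K[X]} {D : ℕ} (hD : ∀ i, lam i ≠ 0 → (lam i).natDegree + d i ≤ D) (j : Fin m) :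
    ((lam ᵥ* P) j).coeff (D - s j) = ((fun i => (lam i).coeff (D - d i)) ᵥ* leadMat s P) j := by
  simp only [Matrix.vecMul, dotProduct, finsetSum_coeff]
  refine Finset.sum_congr rfl fun i _ => ?_
  rw [leadMat_apply_eq_coeff (hd i)]
  by_cases hl : lam i = 0
  · simp [hl]
  by_cases hP : P i j = 0
  · simp [hP]
  have hlD := hD i hl
  have hPd := natDegree_add_le_of_rowDegW_eq (hd i) j hP
  rw [show D - s j = (D - d i) + (d i - s j) by omega]
  exact coeff_mul_add_eq_of_natDegree_le (by omega) (by omega)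

/-- The predictable degree property of `s`-reduced matrices. -/
theorem IsReducedS.degree_add_rowDegW_le (hred : IsReducedS s P) {lam : Fin k → K[X]}
    {b : WithBot ℕ} (hb : ∀ j, ((lam ᵥ* P) j).degree + s j ≤ b) (i₀ : Fin k) :
    (lam i₀).degree + rowDegW s P i₀ ≤ b := by
  classical
  choose d hd using hred.exists_rowDegW_eq
  by_cases hl₀ : lam i₀ = 0
  · simp [hl₀]
  let S := Finset.univ.filter fun i => lam i ≠ 0
  obtain ⟨i₁, hi₁, hmax⟩ := S.exists_max_image (fun i => (lam i).natDegree + d i)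
    ⟨i₀, by simp [S, hl₀]⟩
  set D := (lam i₁).natDegree + d i₁
  have hD : ∀ i, lam i ≠ 0 → (lam i).natDegree + d i ≤ D := fun i hi => hmax i (by simp [S, hi])
  have hl₁ : lam i₁ ≠ 0 := (Finset.mem_filter.mp hi₁).2
  have hv : (fun i => (lam i).coeff (D - d i)) ≠ 0 := by
    refine Function.ne_iff.mpr ⟨i₁, ?_⟩
    simpa [D] using hl₁
  obtain ⟨j, hj⟩ := Function.ne_iff.mp
    ((Matrix.vecMul_injective_iff.mpr hred.linearIndependent_row).ne hv)
  rw [Matrix.zero_vecMul, Pi.zero_apply, ← coeff_vecMul_eq_vecMul_leadMat hd hD] at hj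
  calc (lam i₀).degree + rowDegW s P i₀ ≤ (D : WithBot ℕ) := by
        rw [hd, degree_eq_natDegree hl₀]
        exact_mod_cast hD i₀ hl₀
    _ ≤ ((D - s j : ℕ) : WithBot ℕ) + s j := by norm_cast; omega
    _ ≤ ((lam ᵥ* P) j).degree + s j := by gcongr; exact le_degree_of_ne_zero hj
    _ ≤ b := hb j

end RowDegree

def Submodule.piUnivEquiv {R ι : Type*} [Semiring R] {φ : ι → Type*}
    [∀ i, AddCommMonoid (φ i)] [∀ i, Module R (φ i)] (p : (i : ι) → Submodule R (φ i)) :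
    Submodule.pi Set.univ p ≃ₗ[R] ((i : ι) → p i) where
  toFun x i := ⟨x.1 i, x.2 i trivial⟩
  invFun f := ⟨fun i => f i, fun i _ => (f i).2⟩
  map_add' _ _ := rfl
  map_smul' _ _ := rfl
  left_inv _ := rfl
  right_inv _ := rfl

theorem finrank_le_finrank_add_of_inf_ker_le {K V W : Type*} [DivisionRing K] [AddCommGroup V]
    [Module K V] [AddCommGroup W] [Module K W] [FiniteDimensional K W] (f : V →ₗ[K] W)
    {A B : Submodule K V} [FiniteDimensional K A] [FiniteDimensional K B]
    (h : A ⊓ LinearMap.ker f ≤ B) :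
    Module.finrank K A ≤ Module.finrank K B + Module.finrank K W := by
  have hker : Module.finrank K (LinearMap.ker (f.domRestrict A)) ≤ Module.finrank K B := by
    rw [← Submodule.finrank_map_subtype_eq, LinearMap.ker_domRestrict,
      Submodule.map_comap_subtype]
    exact Submodule.finrank_mono h
  have := (f.domRestrict A).finrank_range_add_finrank_ker
  have := (LinearMap.range (f.domRestrict A)).finrank_le
  omega

section SDegreeLE

variable (K : Type*) [Field K] {m : ℕ}

/-- Vectors of `s`-degree at most `t`; when `s j > t` the bound `t + 1 - s j` truncates to `0`,
forcing `q j = 0`. -/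
noncomputable def sDegreeLE (s : Fin m → ℕ) (t : ℕ) : Submodule K (Fin m → K[X]) :=
  Submodule.pi Set.univ fun j => degreeLT K (t + 1 - s j)

variable {K}

theorem mem_sDegreeLE {s : Fin m → ℕ} {t : ℕ} {q : Fin m → K[X]} :
    q ∈ sDegreeLE K s t ↔ ∀ j, (q j).degree + s j ≤ t := by
  simp only [sDegreeLE, Submodule.mem_pi, Set.mem_univ, true_implies, mem_degreeLT]
  refine forall_congr' fun j => ?_
  by_cases hq : q j = 0
  · simp [hq]
  rw [degree_eq_natDegree hq]
  norm_cast
  omega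

instance (s : Fin m → ℕ) (t : ℕ) : FiniteDimensional K (sDegreeLE K s t) :=
  (Submodule.piUnivEquiv _).symm.finiteDimensional

theorem finrank_sDegreeLE (s : Fin m → ℕ) (t : ℕ) :
    Module.finrank K (sDegreeLE K s t) = ∑ j, (t + 1 - s j) := by
  rw [sDegreeLE, (Submodule.piUnivEquiv _).finrank_eq, Module.finrank_pi_fintype]
  simp [Module.finrank_eq_card_basis (degreeLT.basis K _)]

end SDegreeLE

theorem IsReducedS.sDegreeLE_inf_span_le {K : Type*} [Field K] {k m : ℕ} {s : Fin m → ℕ}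
    {P : Matrix (Fin k) (Fin m) K[X]} (hred : IsReducedS s P) {d : Fin k → ℕ}
    (hd : ∀ i, rowDegW s P i = d i) (t : ℕ) :
    sDegreeLE K s t ⊓ (Submodule.span K[X] (Set.range fun i => P i)).restrictScalars K ≤
      (sDegreeLE K d t).map ((Matrix.vecMulLinear P).restrictScalars K) := by
  rintro q ⟨hq, hspan⟩
  obtain ⟨lam, rfl⟩ := (Submodule.mem_span_range_iff_exists_fun K[X]).mp hspan
  rw [← Matrix.vecMul_eq_sum] at hq ⊢
  refine ⟨lam, mem_sDegreeLE.mpr fun i => ?_, rfl⟩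
  rw [← hd]
  exact hred.degree_add_rowDegW_le (mem_sDegreeLE.mp hq) i

/-- `IsInterpolant E M q` unfolds to `interpolantEval E M q = 0`. -/
noncomputable def interpolantEval {K : Type*} [Field K] {m σ : ℕ} (E : Matrix (Fin m) (Fin σ) K)
    (M : Matrix (Fin σ) (Fin σ) K) : (Fin m → K[X]) →ₗ[K] (Fin σ → K) where
  toFun q := ∑ c, Matrix.vecMul (E c) (aeval M (q c))
  map_add' p q := by simp [Matrix.vecMul_add, Finset.sum_add_distrib]
  map_smul' a q := by simp [Matrix.vecMul_smul, Finset.smul_sum]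

theorem Nat.sum_le_add_sum_of_sum_sub_le {ι : Type*} [Fintype ι] {f g : ι → ℕ} {N c : ℕ}
    (hf : ∀ i, f i ≤ N) (hg : ∀ i, g i ≤ N) (h : ∑ i, (N - g i) ≤ ∑ i, (N - f i) + c) :
    ∑ i, f i ≤ c + ∑ i, g i := by
  rw [Finset.sum_tsub_distrib _ fun i _ => hf i, Finset.sum_tsub_distrib _ fun i _ => hg i] at h
  have hf' := Finset.sum_le_sum fun i (_ : i ∈ Finset.univ) => hf i
  have hg' := Finset.sum_le_sum fun i (_ : i ∈ Finset.univ) => hg i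
  omega

/-- for any `s`-minimal interpolation basis `P` for `(E,M)`, the sum of
the `s`-row degrees of `P` is at most `σ + (s_1 + ⋯ + s_m)`. -/
theorem sum_rowDeg_minimal_interpolation_basis_le
    {K : Type*} [Field K] {m σ : ℕ}
    (E : Matrix (Fin m) (Fin σ) K) (M : Matrix (Fin σ) (Fin σ) K) (s : Fin m → ℕ)
    (P : Matrix (Fin m) (Fin m) (Polynomial K))
    (hbasis : IsInterpBasis E M P) (hred : IsReducedS s P) :
    ∑ i, rowDegW s P i ≤ ((σ + ∑ j, s j : ℕ) : WithBot ℕ) := by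
  choose d hd using hred.exists_rowDegW_eq
  set t := ∑ i, d i + ∑ j, s j
  have hkernel : sDegreeLE K s t ⊓ LinearMap.ker (interpolantEval E M) ≤
      (sDegreeLE K d t).map ((Matrix.vecMulLinear P).restrictScalars K) :=
    le_trans (inf_le_inf_left _ fun q hq => (hbasis.2 q).mp hq) (hred.sDegreeLE_inf_span_le hd t)
  have hd_le : ∀ i, d i ≤ t + 1 := fun i => by
    have := Finset.single_le_sum (fun j _ => Nat.zero_le (d j)) (Finset.mem_univ i)
    omega
  have hs_le : ∀ j, s j ≤ t + 1 := fun j => by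
    have := Finset.single_le_sum (fun i _ => Nat.zero_le (s i)) (Finset.mem_univ j)
    omega
  have hcount : ∑ j, (t + 1 - s j) ≤ ∑ i, (t + 1 - d i) + σ := by
    rw [← finrank_sDegreeLE (K := K), ← finrank_sDegreeLE (K := K),
      ← Module.finrank_fin_fun K (n := σ)]
    exact (finrank_le_finrank_add_of_inf_ker_le _ hkernel).trans
      (Nat.add_le_add_right (Submodule.finrank_map_le _ _) _)
  simp only [hd]
  exact_mod_cast Nat.sum_le_add_sum_of_sum_sub_le hd_le hs_le hcount
end

section
/- Let E ∈ K^{m×σ}, M ∈ K^{σ×σ}, s ∈ ℕ^m, δ a bound on deg of the minimal polynomial of M, and (δ_1,…,δ_m) the s-minimal degree. Then there exists a matrix P ∈ K[X]^{m×m} with deg P ≤ δ, in s-weak Popov form with s-pivot entries on the diagonal and s-pivot degree (δ_1,…,δ_m), such that every row of P is an interpolant for (E,M); moreover any such P is an s-minimal interpolation basis for (E,M). -/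
/-!
Monomials `(c, d)` of row vectors are compared by `keyLt`, i.e. lexicographically on
`(s c + d, c)`; the `s`-pivot of a nonzero row is its leading monomial for this order.
A dependency of Krylov row `(c, δ_c)` on earlier rows, read as a row of polynomials, is an
interpolant with leading monomial `(c, δ_c)`; these rows form `P`. Conversely the leading
monomial `(c, e)` of an interpolant yields a dependency of row `(c, e)` on earlier rows (powers
of `M` beyond `δ` are first reduced modulo the minimal polynomial), so `e ≥ δ_c`. The leading
term can therefore be cancelled by a multiple of `P c`, and well-founded induction on the leading
monomial shows that the rows of `P` generate all interpolants. Distinct pivot positions make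
the rows independent and the `s`-leading matrix lower triangular with nonzero diagonal.
-/

open Polynomial Matrix

section Key

variable {m : ℕ} (s : Fin m → ℕ)

def key (x : Fin m × ℕ) : ℕ ×ₗ Fin m :=
  toLex (s x.1 + x.2, x.1)

theorem keyLt_iff_key_lt {x y : Fin m × ℕ} : keyLt s x y ↔ key s x < key s y :=
  (Prod.Lex.toLex_lt_toLex (x := (s x.1 + x.2, x.1)) (y := (s y.1 + y.2, y.1))).symm

theorem key_le_key_iff {x y : Fin m × ℕ} :
    key s x ≤ key s y ↔ s x.1 + x.2 < s y.1 + y.2 ∨ (s x.1 + x.2 = s y.1 + y.2 ∧ x.1 ≤ y.1) :=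
  Prod.Lex.toLex_le_toLex

theorem key_injective : Function.Injective (key s) := by
  rintro ⟨c, d⟩ ⟨c', d'⟩ h
  simp only [key, toLex_inj, Prod.mk.injEq] at h
  obtain ⟨h1, rfl⟩ := h
  simp only [Prod.mk.injEq, true_and]
  omega

theorem key_le_key_of_le {c : Fin m} {d e : ℕ} (h : d ≤ e) : key s (c, d) ≤ key s (c, e) :=
  (key_le_key_iff s).2 (by simp only; omega)

theorem key_lt_key_of_lt {c : Fin m} {d e : ℕ} (h : d < e) : key s (c, d) < key s (c, e) :=
  Prod.Lex.toLex_lt_toLex.2 (Or.inl (by simp only; omega))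

theorem key_add_le_key_add {j c : Fin m} {d e : ℕ} (h : key s (j, d) ≤ key s (c, e)) (k : ℕ) :
    key s (j, d + k) ≤ key s (c, e + k) := by
  rw [key_le_key_iff] at h ⊢
  simp only at h ⊢
  omega

end Key

section Rows

variable {K : Type*} [Field K] {m : ℕ} (s : Fin m → ℕ)

def KeysLE (q : Fin m → K[X]) (z : ℕ ×ₗ Fin m) : Prop :=
  ∀ j d, (q j).coeff d ≠ 0 → key s (j, d) ≤ z

def KeysLT (q : Fin m → K[X]) (z : ℕ ×ₗ Fin m) : Prop :=
  ∀ j d, (q j).coeff d ≠ 0 → key s (j, d) < z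

variable {s}

theorem degree_add_natCast {p : K[X]} (hp : p ≠ 0) (k : ℕ) :
    p.degree + (k : WithBot ℕ) = ((p.natDegree + k : ℕ) : WithBot ℕ) := by
  rw [degree_eq_natDegree hp]
  rfl

theorem le_rowDegVec (q : Fin m → K[X]) (j : Fin m) :
    (q j).degree + (s j : WithBot ℕ) ≤ rowDegVec s q :=
  Finset.le_sup (f := fun j => (q j).degree + (s j : WithBot ℕ)) (Finset.mem_univ j)

theorem IsPivotIdx.apply_ne_zero {q : Fin m → K[X]} {c : Fin m} (hc : IsPivotIdx s q c)
    (hq : q ≠ 0) : q c ≠ 0 := by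
  intro hqc
  obtain ⟨j, hj⟩ : ∃ j, q j ≠ 0 := by
    by_contra! h
    exact hq (funext h)
  have h := le_rowDegVec (s := s) q j
  rw [← hc.1, hqc, degree_zero, WithBot.bot_add, degree_add_natCast hj, le_bot_iff] at h
  exact WithBot.coe_ne_bot h

theorem exists_isPivotIdx {q : Fin m → K[X]} (hq : q ≠ 0) : ∃ c, IsPivotIdx s q c := by
  classical
  obtain ⟨j, -⟩ : ∃ j, q j ≠ 0 := by
    by_contra! h
    exact hq (funext h)
  obtain ⟨c₀, -, hc₀⟩ := Finset.exists_mem_eq_sup Finset.univ ⟨j, Finset.mem_univ j⟩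
    fun j => (q j).degree + (s j : WithBot ℕ)
  let A := Finset.univ.filter fun c => (q c).degree + (s c : WithBot ℕ) = rowDegVec s q
  have hA : A.Nonempty := ⟨c₀, by simp [A, rowDegVec, hc₀]⟩
  exact ⟨A.max' hA, (Finset.mem_filter.1 (A.max'_mem hA)).2,
    fun c hc => A.le_max' c (by simp [A, hc])⟩

theorem isPivotIdx_iff_keysLE {q : Fin m → K[X]} {c : Fin m} (hqc : q c ≠ 0) :
    IsPivotIdx s q c ↔ KeysLE s q (key s (c, (q c).natDegree)) := by
  constructor
  · intro hc j d hd
    have hqj : q j ≠ 0 := fun h => hd (by simp [h])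
    have hdj := le_natDegree_of_ne_zero hd
    have hj := le_rowDegVec (s := s) q j
    rw [← hc.1, degree_add_natCast hqj, degree_add_natCast hqc, Nat.cast_le] at hj
    rw [key_le_key_iff]
    rcases (show s j + d ≤ s c + (q c).natDegree by omega).lt_or_eq with h | h
    · exact Or.inl h
    · refine Or.inr ⟨h, hc.2 j ?_⟩
      rw [← hc.1, degree_add_natCast hqj, degree_add_natCast hqc]
      congr 1
      omega
  · intro hkeys
    have hkey : ∀ j, q j ≠ 0 → s j + (q j).natDegree < s c + (q c).natDegree ∨
        (s j + (q j).natDegree = s c + (q c).natDegree ∧ j ≤ c) :=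
      fun j hqj => (key_le_key_iff s).1 (hkeys j _ (leadingCoeff_ne_zero.2 hqj))
    have hrow : rowDegVec s q = (q c).degree + (s c : WithBot ℕ) := by
      refine le_antisymm (Finset.sup_le fun j _ => ?_) (le_rowDegVec q c)
      by_cases hqj : q j = 0
      · simp [hqj]
      · rw [degree_add_natCast hqj, degree_add_natCast hqc, Nat.cast_le]
        have := hkey j hqj
        omega
    refine ⟨hrow.symm, fun j hj => ?_⟩
    have hqj : q j ≠ 0 := by
      rintro h
      rw [h, degree_zero, WithBot.bot_add, hrow, degree_add_natCast hqc] at hj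
      exact WithBot.bot_ne_coe hj
    rw [hrow, degree_add_natCast hqj, degree_add_natCast hqc, Nat.cast_inj] at hj
    have := hkey j hqj
    omega

theorem KeysLE.smul {q : Fin m → K[X]} {c : Fin m} {d : ℕ} (h : KeysLE s q (key s (c, d)))
    (f : K[X]) : KeysLE s (f • q) (key s (c, d + f.natDegree)) := by
  intro j n hn
  rw [Pi.smul_apply, smul_eq_mul, coeff_mul] at hn
  obtain ⟨⟨a, b⟩, hab, hne⟩ := Finset.exists_ne_zero_of_sum_ne_zero hn
  rw [Finset.HasAntidiagonal.mem_antidiagonal] at hab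
  have ha : a ≤ f.natDegree := le_natDegree_of_ne_zero (left_ne_zero_of_mul hne)
  calc key s (j, n) = key s (j, b + a) := by rw [← hab, add_comm]
    _ ≤ key s (c, d + a) := key_add_le_key_add s (h j b (right_ne_zero_of_mul hne)) a
    _ ≤ key s (c, d + f.natDegree) := key_le_key_of_le s (by omega)

theorem KeysLE.sub_keysLT {p r : Fin m → K[X]} {z : Fin m × ℕ} (hp : KeysLE s p (key s z))
    (hr : KeysLE s r (key s z)) (hz : (p z.1).coeff z.2 = (r z.1).coeff z.2) :
    KeysLT s (p - r) (key s z) := by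
  intro j d hd
  rw [Pi.sub_apply, coeff_sub, sub_ne_zero] at hd
  have hne : (j, d) ≠ z := by
    rintro rfl
    exact hd hz
  refine lt_of_le_of_ne ?_ ((key_injective s).ne hne)
  by_cases hpj : (p j).coeff d = 0
  · exact hr j d (hpj ▸ hd.symm)
  · exact hp j d hpj

theorem exists_keysLT_sub_smul {p q : Fin m → K[X]} {c : Fin m} (hp : IsPivotIdx s p c)
    (hpc : p c ≠ 0) (hq : IsPivotIdx s q c) (hqc : q c ≠ 0)
    (hdeg : (p c).natDegree ≤ (q c).natDegree) :
    ∃ f : K[X], KeysLT s (q - f • p) (key s (c, (q c).natDegree)) := by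
  set k := (q c).natDegree - (p c).natDegree
  set a := (q c).leadingCoeff / (p c).leadingCoeff
  refine ⟨C a * X ^ k, KeysLE.sub_keysLT ((isPivotIdx_iff_keysLE hqc).1 hq) ?_ ?_⟩
  · intro j d hd
    refine (((isPivotIdx_iff_keysLE hpc).1 hp).smul _ j d hd).trans (key_le_key_of_le s ?_)
    have := natDegree_C_mul_X_pow_le a k
    omega
  · simp only [Pi.smul_apply, smul_eq_mul, mul_assoc, coeff_C_mul, coeff_X_pow_mul']
    rw [if_pos (Nat.sub_le _ _), Nat.sub_sub_self hdeg, coeff_natDegree]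
    exact (div_mul_cancel₀ _ (leadingCoeff_ne_zero.2 hpc)).symm

theorem linearIndependent_of_isPivotIdx {ι : Type*} [Fintype ι] {v : ι → Fin m → K[X]}
    {piv : ι → Fin m} (hpiv : Function.Injective piv) (hv : ∀ i, v i ≠ 0)
    (h : ∀ i, IsPivotIdx s (v i) (piv i)) : LinearIndependent K[X] v := by
  classical
  rw [Fintype.linearIndependent_iff]
  intro g hg
  by_contra! hg0
  obtain ⟨i₀, hi₀⟩ := hg0
  have hvi : ∀ i, v i (piv i) ≠ 0 := fun i => (h i).apply_ne_zero (hv i)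
  let top : ι → Fin m × ℕ := fun i => (piv i, (v i (piv i)).natDegree + (g i).natDegree)
  have hkeys : ∀ i, KeysLE s (g i • v i) (key s (top i)) := fun i =>
    ((isPivotIdx_iff_keysLE (hvi i)).1 (h i)).smul (g i)
  obtain ⟨i₁, hi₁, hmax⟩ := Finset.exists_max_image (Finset.univ.filter fun i => g i ≠ 0)
    (fun i => key s (top i)) ⟨i₀, by simp [hi₀]⟩
  have hg₁ : g i₁ ≠ 0 := (Finset.mem_filter.1 hi₁).2
  -- the pivot monomials of the nonzero summands have distinct keys, so the largest one survives
  have hcoeff : ∀ i ≠ i₁, ((g i • v i) (piv i₁)).coeff (top i₁).2 = 0 := by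
    intro i hi
    by_contra hne
    have hgi : g i ≠ 0 := fun hgi => hne (by simp [hgi])
    have heq := le_antisymm (hmax i (by simp [hgi])) (hkeys i _ _ hne)
    exact hi (hpiv (congrArg Prod.fst (key_injective s heq)))
  have hsum := congrArg (fun w => (w (piv i₁)).coeff (top i₁).2) hg
  simp only [Finset.sum_apply, finsetSum_coeff, Pi.zero_apply, coeff_zero] at hsum
  rw [Finset.sum_eq_single i₁ (fun i _ hi => hcoeff i hi) (by simp)] at hsum
  simp only [Pi.smul_apply, smul_eq_mul, top, mul_comm (g i₁), coeff_mul_degree_add_degree] at hsum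
  exact mul_ne_zero (leadingCoeff_ne_zero.2 (hvi i₁)) (leadingCoeff_ne_zero.2 hg₁) hsum

theorem isReducedS_of_isPivotIdx {P : Matrix (Fin m) (Fin m) K[X]} (hP : ∀ c, P c ≠ 0)
    (hpiv : ∀ c, IsPivotIdx s (P c) c) : IsReducedS s P := by
  have htri : (leadMat s P).IsLowerTriangular := fun i j hij =>
    if_neg fun h => (show i < j from hij).not_ge ((hpiv i).2 j h)
  have hdiag : ∀ c, (leadMat s P).diag c ≠ 0 := fun c => by
    have hc : (P c c).degree + (s c : WithBot ℕ) = rowDegW s P c := (hpiv c).1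
    rw [diag_apply, leadMat, if_pos hc]
    exact leadingCoeff_ne_zero.2 ((hpiv c).apply_ne_zero (hP c))
  rw [IsReducedS, ← mul_one (leadMat s P), rank_mul_eq_right_of_isLowerTriangular _ _ htri hdiag,
    rank_one, Fintype.card_fin]

end Rows

section Krylov

variable {K : Type*} [Field K] {m σ : ℕ}
variable (E : Matrix (Fin m) (Fin σ) K) (M : Matrix (Fin σ) (Fin σ) K)

noncomputable def evalRow : (Fin m → K[X]) →ₗ[K] (Fin σ → K) where
  toFun q := ∑ c, E c ᵥ* aeval M (q c)
  map_add' p q := by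
    simp only [Pi.add_apply, map_add, vecMul_add, Finset.sum_add_distrib]
  map_smul' a q := by
    simp only [Pi.smul_apply, map_smul, vecMul_smul, Finset.smul_sum, RingHom.id_apply]

theorem isInterpolant_iff_evalRow_eq_zero {q : Fin m → K[X]} :
    IsInterpolant E M q ↔ evalRow E M q = 0 :=
  Iff.rfl

def interpolants : Submodule K[X] (Fin m → K[X]) where
  carrier := {q | IsInterpolant E M q}
  add_mem' {p q} hp hq := by
    simp only [Set.mem_ofPred_eq, isInterpolant_iff_evalRow_eq_zero, map_add] at hp hq ⊢
    rw [hp, hq, add_zero]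
  zero_mem' := map_zero (evalRow E M)
  smul_mem' f q hq := by
    change ∑ c, E c ᵥ* aeval M (f * q c) = 0
    simp_rw [mul_comm f, map_mul, ← vecMul_vecMul]
    rw [← sum_vecMul]
    exact (congrArg (· ᵥ* aeval M f) hq).trans (zero_vecMul _)

noncomputable def rowOfFinsupp (l : Fin m × ℕ →₀ K) : Fin m → K[X] :=
  l.sum fun y a => Pi.single y.1 (monomial y.2 a)

theorem coeff_rowOfFinsupp (l : Fin m × ℕ →₀ K) (j : Fin m) (d : ℕ) :
    (rowOfFinsupp l j).coeff d = l (j, d) := by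
  classical
  simp only [rowOfFinsupp, Finsupp.sum, Finset.sum_apply, finsetSum_coeff, Pi.single_apply]
  rw [Finset.sum_eq_single (j, d) (fun y _ hy => ?_) (fun h => ?_), if_pos rfl, coeff_monomial,
    if_pos rfl]
  · split_ifs with hj
    · rw [coeff_monomial, if_neg fun hd => hy (Prod.ext hj.symm hd)]
    · exact coeff_zero d
  · rw [if_pos rfl, coeff_monomial, if_pos rfl, Finsupp.notMem_support_iff.1 h]

theorem evalRow_single (j : Fin m) (p : K[X]) :
    evalRow E M (Pi.single j p) = E j ᵥ* aeval M p := by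
  classical
  change ∑ c, E c ᵥ* aeval M ((Pi.single j p : Fin m → K[X]) c) = _
  rw [Finset.sum_eq_single j (fun c _ hc => by rw [Pi.single_eq_of_ne hc, map_zero, vecMul_zero])
    (by simp), Pi.single_eq_same]

theorem evalRow_rowOfFinsupp (l : Fin m × ℕ →₀ K) :
    evalRow E M (rowOfFinsupp l) =
      Finsupp.linearCombination K (fun y : Fin m × ℕ => E y.1 ᵥ* M ^ y.2) l := by
  rw [rowOfFinsupp, map_finsuppSum, Finsupp.linearCombination_apply]
  refine Finsupp.sum_congr fun y _ => ?_
  rw [evalRow_single, aeval_monomial, ← Algebra.smul_def, vecMul_smul]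

def earlierSpan (s : Fin m → ℕ) (δ : ℕ) (z : Fin m × ℕ) : Submodule K (Fin σ → K) :=
  Submodule.span K ((fun y : Fin m × ℕ => E y.1 ᵥ* M ^ y.2) '' {y | y.2 ≤ δ ∧ keyLt s y z})

theorem vecMul_pow_mem_span_lowerPowers (v : Fin σ → K) (d : ℕ) :
    v ᵥ* M ^ d ∈
      Submodule.span K ((fun i => v ᵥ* M ^ i) '' Set.Iio (minpoly K M).natDegree) := by
  have hμ := minpoly.monic (IsIntegral.of_finite K M)
  rw [← aeval_X_pow (R := K), ← aeval_modByMonic_eq_self_of_root (minpoly.aeval K M),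
    aeval_eq_sum_range, vecMul_sum]
  refine Submodule.sum_mem _ fun i _ => ?_
  rw [vecMul_smul]
  by_cases hi : (X ^ d %ₘ minpoly K M).coeff i = 0
  · rw [hi, zero_smul]
    exact Submodule.zero_mem _
  refine Submodule.smul_mem _ _ (Submodule.subset_span ⟨i, ?_, rfl⟩)
  have := (le_degree_of_ne_zero hi).trans_lt (degree_modByMonic_lt (X ^ d) hμ)
  rwa [degree_eq_natDegree hμ.ne_zero, Nat.cast_lt] at this

variable {E M}

theorem depEarlier_iff_mem_earlierSpan {s : Fin m → ℕ} {δ : ℕ} {c : Fin m} {d : ℕ} :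
    DepEarlier E M s δ c d ↔ E c ᵥ* M ^ d ∈ earlierSpan E M s δ (c, d) :=
  Iff.rfl

theorem vecMul_pow_mem_earlierSpan {s : Fin m → ℕ} {δ : ℕ}
    (hδ : (minpoly K M).natDegree ≤ δ) {j : Fin m} {d : ℕ} {z : Fin m × ℕ}
    (hz : keyLt s (j, d) z) : E j ᵥ* M ^ d ∈ earlierSpan E M s δ z := by
  by_cases hd : d ≤ δ
  · exact Submodule.subset_span ⟨(j, d), ⟨hd, hz⟩, rfl⟩
  refine Submodule.span_le.2 ?_ (vecMul_pow_mem_span_lowerPowers M (E j) d)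
  rintro _ ⟨i, hi, rfl⟩
  rw [Set.mem_Iio] at hi
  refine Submodule.subset_span ⟨(j, i), ⟨by omega, ?_⟩, rfl⟩
  rw [keyLt_iff_key_lt] at hz ⊢
  exact (key_lt_key_of_lt s (show i < d by omega)).trans hz

theorem IsMinDeg.apply_le {s : Fin m → ℕ} {δ : ℕ} {dm : Fin m → ℕ}
    (hdm : IsMinDeg E M s δ dm) (hδ : (minpoly K M).natDegree ≤ δ) (c : Fin m) : dm c ≤ δ := by
  refine le_trans (not_lt.1 fun h => (hdm c).2 _ h (depEarlier_iff_mem_earlierSpan.2 ?_)) hδ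
  refine Submodule.span_le.2 ?_ (vecMul_pow_mem_span_lowerPowers M (E c) _)
  rintro _ ⟨i, hi, rfl⟩
  exact Submodule.subset_span ⟨(c, i), ⟨(le_of_lt hi).trans hδ,
    (keyLt_iff_key_lt s).2 (key_lt_key_of_lt s hi)⟩, rfl⟩

theorem evalRow_mem_earlierSpan {s : Fin m → ℕ} {δ : ℕ} (hδ : (minpoly K M).natDegree ≤ δ)
    {q : Fin m → K[X]} {z : Fin m × ℕ} (hq : KeysLT s q (key s z)) :
    evalRow E M q ∈ earlierSpan E M s δ z := by
  change ∑ j, E j ᵥ* aeval M (q j) ∈ _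
  refine Submodule.sum_mem _ fun j _ => ?_
  rw [aeval_eq_sum_range, vecMul_sum]
  refine Submodule.sum_mem _ fun d _ => ?_
  rw [vecMul_smul]
  by_cases hd : (q j).coeff d = 0
  · rw [hd, zero_smul]
    exact Submodule.zero_mem _
  · exact Submodule.smul_mem _ _
      (vecMul_pow_mem_earlierSpan hδ ((keyLt_iff_key_lt s).2 (hq j d hd)))

theorem IsMinDeg.le_natDegree {s : Fin m → ℕ} {δ : ℕ} {dm : Fin m → ℕ}
    (hdm : IsMinDeg E M s δ dm) (hδ : (minpoly K M).natDegree ≤ δ) {q : Fin m → K[X]}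
    (hq : IsInterpolant E M q) {c : Fin m} (hqc : q c ≠ 0) (hc : IsPivotIdx s q c) :
    dm c ≤ (q c).natDegree := by
  classical
  set e := (q c).natDegree
  set a := (q c).leadingCoeff
  refine not_lt.1 fun he => (hdm c).2 e he (depEarlier_iff_mem_earlierSpan.2 ?_)
  have hlead : KeysLE s (rowOfFinsupp (Finsupp.single (c, e) a)) (key s (c, e)) := by
    intro j d hd
    rw [coeff_rowOfFinsupp, Finsupp.single_apply] at hd
    rw [← (ite_ne_right_iff.1 hd).1]
  have hrest := evalRow_mem_earlierSpan (E := E) (M := M) hδ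
    (((isPivotIdx_iff_keysLE hqc).1 hc).sub_keysLT hlead
      (by rw [coeff_rowOfFinsupp, Finsupp.single_eq_same]; rfl))
  rw [map_sub, evalRow_rowOfFinsupp, Finsupp.linearCombination_single,
    (isInterpolant_iff_evalRow_eq_zero E M).1 hq, zero_sub, neg_mem_iff] at hrest
  exact (Submodule.smul_mem_iff _ (leadingCoeff_ne_zero.2 hqc)).1 hrest

end Krylov

section Basis

variable {K : Type*} [Field K] {m σ : ℕ}
variable (E : Matrix (Fin m) (Fin σ) K) (M : Matrix (Fin σ) (Fin σ) K)

theorem exists_interpolant_of_depEarlier {s : Fin m → ℕ} {δ : ℕ} {c : Fin m} {d : ℕ}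
    (h : DepEarlier E M s δ c d) (hd : d ≤ δ) :
    ∃ p : Fin m → K[X], (∀ j, (p j).degree ≤ (δ : WithBot ℕ)) ∧ p ≠ 0 ∧ IsPivotIdx s p c ∧
      (p c).natDegree = d ∧ IsInterpolant E M p := by
  classical
  obtain ⟨l, hl, hlE⟩ := (Finsupp.mem_span_image_iff_linearCombination K).1 h
  have hsupp : ∀ y, l y ≠ 0 → y.2 ≤ δ ∧ keyLt s y (c, d) := fun y hy =>
    (Finsupp.mem_supported K l).1 hl (Finsupp.mem_support_iff.2 hy)
  -- the dependency `E c M^d = ∑ l y • E y.1 M^y.2` read as a row of polynomials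
  set p := rowOfFinsupp (Finsupp.single (c, d) 1 - l)
  have hcoeff : ∀ j n, (p j).coeff n ≠ 0 → (j, n) = (c, d) ∨ (n ≤ δ ∧ keyLt s (j, n) (c, d)) := by
    intro j n hn
    rw [coeff_rowOfFinsupp, Finsupp.coe_sub, Pi.sub_apply, Finsupp.single_apply] at hn
    by_cases hy : (c, d) = (j, n)
    · exact Or.inl hy.symm
    · rw [if_neg hy, zero_sub, neg_ne_zero] at hn
      exact Or.inr (hsupp _ hn)
  have hpc : (p c).coeff d = 1 := by
    have hl0 : l (c, d) = 0 := by
      by_contra hne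
      exact lt_irrefl _ ((keyLt_iff_key_lt s).1 (hsupp _ hne).2)
    rw [coeff_rowOfFinsupp, Finsupp.coe_sub, Pi.sub_apply, Finsupp.single_eq_same, hl0, sub_zero]
  have hkeys : KeysLE s p (key s (c, d)) := fun j n hn =>
    (hcoeff j n hn).elim (fun h => h ▸ le_rfl) fun h => ((keyLt_iff_key_lt s).1 h.2).le
  have hdeg : (p c).natDegree = d := by
    refine le_antisymm (natDegree_le_iff_coeff_eq_zero.2 fun n hn => ?_)
      (le_natDegree_of_ne_zero (hpc ▸ one_ne_zero))
    by_contra hne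
    exact (key_lt_key_of_lt s hn).not_ge (hkeys c n hne)
  have hpc0 : p c ≠ 0 := fun h0 => by simp [h0] at hpc
  refine ⟨p, fun j => (degree_le_iff_coeff_zero _ _).2 fun n hn => ?_, fun h0 => hpc0 (by
    rw [h0]; rfl), (isPivotIdx_iff_keysLE hpc0).2 (hdeg ▸ hkeys), hdeg, ?_⟩
  · by_contra hne
    rw [Nat.cast_lt] at hn
    rcases hcoeff j n hne with h | h
    · have : n = d := congrArg Prod.snd h
      omega
    · exact absurd h.1 (not_le.2 hn)
  · rw [isInterpolant_iff_evalRow_eq_zero, evalRow_rowOfFinsupp, map_sub,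
      Finsupp.linearCombination_single, one_smul, hlE, sub_self]

variable {E M}

theorem mem_span_of_keysLT {s : Fin m → ℕ} {δ : ℕ} {dm : Fin m → ℕ}
    (hδ : (minpoly K M).natDegree ≤ δ) (hdm : IsMinDeg E M s δ dm)
    {P : Matrix (Fin m) (Fin m) K[X]} (hP : ∀ c, P c ≠ 0) (hpiv : ∀ c, IsPivotIdx s (P c) c)
    (hdeg : ∀ c, (P c c).natDegree = dm c) (hint : ∀ c, P c ∈ interpolants E M)
    (z : ℕ ×ₗ Fin m) {q : Fin m → K[X]} (hq : q ∈ interpolants E M) (hqz : KeysLT s q z) :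
    q ∈ Submodule.span K[X] (Set.range fun i => P i) := by
  induction z using WellFoundedLT.induction generalizing q with
  | _ z ih =>
  by_cases hq0 : q = 0
  · exact hq0 ▸ Submodule.zero_mem _
  obtain ⟨c, hc⟩ := exists_isPivotIdx (s := s) hq0
  have hqc := hc.apply_ne_zero hq0
  obtain ⟨f, hf⟩ := exists_keysLT_sub_smul (hpiv c) ((hpiv c).apply_ne_zero (hP c)) hc hqc
    ((hdeg c).trans_le (hdm.le_natDegree hδ hq hqc hc))
  have hlt : key s (c, (q c).natDegree) < z := hqz c _ (leadingCoeff_ne_zero.2 hqc)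
  have hrest := ih _ hlt (sub_mem hq (Submodule.smul_mem _ f (hint c))) hf
  simpa using add_mem hrest (Submodule.smul_mem _ f (Submodule.subset_span ⟨c, rfl⟩))

theorem isInterpBasis_of_isPivotIdx {s : Fin m → ℕ} {δ : ℕ} {dm : Fin m → ℕ}
    (hδ : (minpoly K M).natDegree ≤ δ) (hdm : IsMinDeg E M s δ dm)
    {P : Matrix (Fin m) (Fin m) K[X]} (hP : ∀ c, P c ≠ 0) (hpiv : ∀ c, IsPivotIdx s (P c) c)
    (hdeg : ∀ c, (P c c).natDegree = dm c) (hint : ∀ c, IsInterpolant E M (P c)) :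
    IsInterpBasis E M P := by
  refine ⟨linearIndependent_of_isPivotIdx Function.injective_id hP hpiv, fun q => ⟨fun hq => ?_,
    fun hq => show q ∈ interpolants E M from Submodule.span_le.2 (Set.range_subset_iff.2 hint) hq⟩⟩
  by_cases hq0 : q = 0
  · exact hq0 ▸ Submodule.zero_mem _
  obtain ⟨c, hc⟩ := exists_isPivotIdx (s := s) hq0
  have hqc := hc.apply_ne_zero hq0
  refine mem_span_of_keysLT hδ hdm hP hpiv hdeg hint (key s (c, (q c).natDegree + 1)) hq
    fun j d hd => ?_
  exact ((isPivotIdx_iff_keysLE hqc).1 hc j d hd).trans_lt (key_lt_key_of_lt s (Nat.lt_succ_self _))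

end Basis

/-- there exists `P` of degree at most `δ`, in `s`-weak Popov form with
`s`-pivot entries on the diagonal and `s`-pivot degree `(δ_1,…,δ_m)`, whose rows are
interpolants for `(E,M)`; and any such `P` is an `s`-minimal interpolation basis. -/
theorem exists_weak_popov_interpolation_basis
    {K : Type*} [Field K] {m σ δ : ℕ}
    (E : Matrix (Fin m) (Fin σ) K) (M : Matrix (Fin σ) (Fin σ) K) (s : Fin m → ℕ)
    (hδ : (minpoly K M).natDegree ≤ δ)
    (dm : Fin m → ℕ) (hdm : IsMinDeg E M s δ dm) :
    (∃ P : Matrix (Fin m) (Fin m) (Polynomial K),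
      (∀ i j, (P i j).degree ≤ (δ : WithBot ℕ)) ∧
      (∀ c, P c ≠ 0 ∧ IsPivotIdx s (P c) c ∧ (P c c).natDegree = dm c) ∧
      (∀ c, IsInterpolant E M (P c)))
    ∧ (∀ P : Matrix (Fin m) (Fin m) (Polynomial K),
        (∀ i j, (P i j).degree ≤ (δ : WithBot ℕ)) →
        (∀ c, P c ≠ 0 ∧ IsPivotIdx s (P c) c ∧ (P c c).natDegree = dm c) →
        (∀ c, IsInterpolant E M (P c)) →
        IsInterpBasis E M P ∧ IsReducedS s P) := by
  refine ⟨?_, fun P _ hP hint =>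
    ⟨isInterpBasis_of_isPivotIdx hδ hdm (fun c => (hP c).1) (fun c => (hP c).2.1)
      (fun c => (hP c).2.2) hint, isReducedS_of_isPivotIdx (fun c => (hP c).1) fun c => (hP c).2.1⟩⟩
  choose P hPdeg hP hpiv hdeg hint using fun c =>
    exists_interpolant_of_depEarlier E M (hdm c).1 (hdm.apply_le hδ c)
  exact ⟨P, hPdeg, fun c => ⟨hP c, hpiv c, hdeg c⟩, hint⟩
end

section
/- Fix E ∈ K^{m×σ}, M ∈ K^{σ×σ}, and a shift s ∈ ℕ^m. Among all interpolation bases for (E,M), there is exactly one that is in s-Popov form. -/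
open Polynomial Matrix

/-- `P` is in `s`-Popov form: the `s`-pivots are monic, on the diagonal, and in each
column the nonpivot entries have degree strictly smaller than the pivot entry. -/
noncomputable def IsPopov {K : Type*} [Field K] {m : ℕ} (s : Fin m → ℕ)
    (P : Matrix (Fin m) (Fin m) (Polynomial K)) : Prop :=
  ∀ c, (P c c).Monic ∧ IsPivotIdx s (P c) c ∧
    ∀ i, i ≠ c → (P i c).degree < (P c c).degree

/-!
Order the monomials `X ^ e` of column `j` by `(e + s j, j)` lexicographically. The `s`-pivot of a
row is the column of its leading term, so an `s`-Popov matrix is a reduced Gröbner basis of its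
row space for this term order. The interpolants contain `charpoly M` times each unit vector, so
every column `c` is the pivot of some interpolant; take one of minimal pivot degree `d c` and
reduce its off-pivot entries by division. Division with remainder shows that these rows span the
interpolants, since a nonzero remainder would have a pivot of degree below the minimum. The
predictable degree property shows that they are independent, and that the pivot degrees of any
`s`-Popov basis are the `d c`; the difference of two such bases then has all entries below the
pivot degrees, so it vanishes.
-/

namespace PopovForm

variable {K : Type*} [Field K] {m : ℕ} (s : Fin m → ℕ)

def termKey (j : Fin m) (e : ℕ) : ℕ ×ₗ Fin m := toLex (e + s j, j)

def TermsLE (q : Fin m → K[X]) (B : ℕ ×ₗ Fin m) : Prop :=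
  ∀ j e, (q j).coeff e ≠ 0 → termKey s j e ≤ B

def TermsLT (q : Fin m → K[X]) (B : ℕ ×ₗ Fin m) : Prop :=
  ∀ j e, (q j).coeff e ≠ 0 → termKey s j e < B

def HasLead (q : Fin m → K[X]) (c : Fin m) (d : ℕ) : Prop :=
  (q c).coeff d ≠ 0 ∧ TermsLE s q (termKey s c d)

variable {s}

theorem termKey_strictMono (j : Fin m) : StrictMono (termKey s j) := fun e e' h => by
  simp only [termKey, Prod.Lex.toLex_lt_toLex]
  omega

theorem termKey_injective {j j' : Fin m} {e e' : ℕ} (h : termKey s j e = termKey s j' e') :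
    j = j' ∧ e = e' := by
  simp only [termKey, toLex_inj, Prod.mk.injEq] at h
  obtain ⟨h, rfl⟩ := h
  exact ⟨rfl, by omega⟩

theorem termKey_add_le_add {j c : Fin m} {e d : ℕ} (n : ℕ) (h : termKey s j e ≤ termKey s c d) :
    termKey s j (n + e) ≤ termKey s c (n + d) := by
  simp only [termKey, Prod.Lex.toLex_le_toLex] at h ⊢
  omega

namespace TermsLE

variable {q r : Fin m → K[X]} {B : ℕ ×ₗ Fin m}

theorem mono {B' : ℕ ×ₗ Fin m} (hq : TermsLE s q B) (h : B ≤ B') : TermsLE s q B' :=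
  fun j e hje => (hq j e hje).trans h

theorem trans_lt {B' : ℕ ×ₗ Fin m} (hq : TermsLE s q B) (h : B < B') : TermsLT s q B' :=
  fun j e hje => (hq j e hje).trans_lt h

theorem add (hq : TermsLE s q B) (hr : TermsLE s r B) : TermsLE s (q + r) B := fun j e h => by
  by_cases hqj : (q j).coeff e = 0
  · exact hr j e (by simpa [hqj] using h)
  · exact hq j e hqj

theorem neg (hq : TermsLE s q B) : TermsLE s (-q) B := fun j e h => hq j e (by simpa using h)

theorem sub (hq : TermsLE s q B) (hr : TermsLE s r B) : TermsLE s (q - r) B := by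
  simpa only [sub_eq_add_neg] using hq.add hr.neg

theorem smul {c : Fin m} {d : ℕ} (hq : TermsLE s q (termKey s c d)) (a : K[X]) :
    TermsLE s (a • q) (termKey s c (a.natDegree + d)) := fun j e h => by
  have hqj : q j ≠ 0 := by rintro h0; simp [h0] at h
  have he : e ≤ a.natDegree + (q j).natDegree :=
    (le_natDegree_of_ne_zero h).trans natDegree_mul_le
  calc termKey s j e ≤ termKey s j (a.natDegree + (q j).natDegree) :=
        (termKey_strictMono j).monotone he
    _ ≤ termKey s c (a.natDegree + d) :=
      termKey_add_le_add _ (hq j _ (by simpa using leadingCoeff_ne_zero.2 hqj))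

end TermsLE

theorem TermsLT.le {q : Fin m → K[X]} {B : ℕ ×ₗ Fin m} (hq : TermsLT s q B) : TermsLE s q B :=
  fun j e h => (hq j e h).le

theorem TermsLT.trans {q : Fin m → K[X]} {B B' : ℕ ×ₗ Fin m} (hq : TermsLT s q B) (h : B < B') :
    TermsLT s q B' :=
  hq.le.trans_lt h

theorem termsLT_sub_of_hasLead {q w : Fin m → K[X]} {j : Fin m} {e : ℕ} (hq : HasLead s q j e)
    (hw : TermsLE s w (termKey s j e)) (hwq : (w j).coeff e = (q j).coeff e) :
    TermsLT s (q - w) (termKey s j e) := fun j' e' h => by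
  refine lt_of_le_of_ne (hq.2.sub hw j' e' h) fun heq => h ?_
  obtain ⟨rfl, rfl⟩ := termKey_injective heq
  simp [hwq]

theorem exists_hasLead {q : Fin m → K[X]} (hq : q ≠ 0) : ∃ c d, HasLead s q c d := by
  classical
  let terms : Finset (Fin m × ℕ) := Finset.univ.biUnion fun j => (q j).support.image (j, ·)
  have mem_terms {j e} : (j, e) ∈ terms ↔ (q j).coeff e ≠ 0 := by simp [terms]
  obtain ⟨j, hj⟩ := Function.ne_iff.1 hq
  obtain ⟨⟨c, d⟩, hcd, hmax⟩ := terms.exists_max_image (fun x => termKey s x.1 x.2)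
    ⟨(j, (q j).natDegree), mem_terms.2 (by simpa using hj)⟩
  exact ⟨c, d, mem_terms.1 hcd, fun j e h => hmax (j, e) (mem_terms.2 h)⟩

theorem exists_termsLT {q : Fin m → K[X]} (hq : q ≠ 0) : ∃ B, TermsLT s q B := by
  obtain ⟨c, d, -, hle⟩ := exists_hasLead (s := s) hq
  exact ⟨termKey s c (d + 1), hle.trans_lt (termKey_strictMono c (Nat.lt_succ_self d))⟩

theorem hasLead_single {c : Fin m} {p : K[X]} (hp : p ≠ 0) :
    HasLead s (Pi.single c p) c p.natDegree := by
  refine ⟨by simpa using hp, fun j e h => ?_⟩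
  obtain rfl : j = c := by by_contra hjc; simp [hjc] at h
  exact (termKey_strictMono j).monotone (le_natDegree_of_ne_zero (by simpa using h))

namespace HasLead

variable {q : Fin m → K[X]} {c : Fin m} {d : ℕ}

theorem ne_zero (h : HasLead s q c d) : q ≠ 0 := by
  rintro rfl
  exact h.1 (by simp)

theorem apply_ne_zero (h : HasLead s q c d) : q c ≠ 0 := fun h0 => h.1 (by simp [h0])

theorem natDegree_eq (h : HasLead s q c d) : (q c).natDegree = d := by
  refine le_antisymm ((termKey_strictMono c).le_iff_le.1 (h.2 c _ ?_)) (le_natDegree_of_ne_zero h.1)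
  simpa using leadingCoeff_ne_zero.2 h.apply_ne_zero

theorem degree_eq (h : HasLead s q c d) : (q c).degree = d := by
  rw [degree_eq_natDegree h.apply_ne_zero, h.natDegree_eq]

theorem unique {c' : Fin m} {d' : ℕ} (h : HasLead s q c d) (h' : HasLead s q c' d') :
    c = c' ∧ d = d' :=
  termKey_injective (le_antisymm (h'.2 c d h.1) (h.2 c' d' h'.1))

theorem smul (h : HasLead s q c d) {a : K[X]} (ha : a ≠ 0) :
    HasLead s (a • q) c (a.natDegree + d) := by
  refine ⟨?_, h.2.smul a⟩
  rw [Pi.smul_apply, smul_eq_mul, ← h.natDegree_eq, coeff_mul_degree_add_degree]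
  exact mul_ne_zero (leadingCoeff_ne_zero.2 ha) (leadingCoeff_ne_zero.2 h.apply_ne_zero)

end HasLead

section LeadingRows

variable {P : Fin m → Fin m → K[X]} {d : Fin m → ℕ}

/-- The predictable degree property. -/
theorem hasLead_sum_smul (hP : ∀ i, HasLead s (P i) i (d i)) {a : Fin m → K[X]} (ha : a ≠ 0) :
    ∃ c, a c ≠ 0 ∧ HasLead s (∑ i, a i • P i) c ((a c).natDegree + d c) := by
  classical
  let key i := termKey s i ((a i).natDegree + d i)
  obtain ⟨c, hc, hmax⟩ := (Finset.univ.filter fun i => a i ≠ 0).exists_max_image key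
    (by obtain ⟨i, hi⟩ := Function.ne_iff.1 ha; exact ⟨i, by simpa using hi⟩)
  simp only [Finset.mem_filter, Finset.mem_univ, true_and] at hc hmax
  have hterms i : TermsLE s (a i • P i) (key i) := (hP i).2.smul (a i)
  have hlt : ∀ i ≠ c, TermsLT s (a i • P i) (key c) := fun i hic j e h => by
    have hai : a i ≠ 0 := by rintro h0; simp [h0] at h
    exact (hterms i j e h).trans_lt
      (lt_of_le_of_ne (hmax i hai) fun heq => hic (termKey_injective heq).1)
  refine ⟨c, hc, ?_, fun j e h => ?_⟩
  · rw [Finset.sum_apply, finsetSum_coeff, Finset.sum_eq_single c]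
    · exact ((hP c).smul hc).1
    · exact fun i _ hic => by_contra fun h => (hlt i hic c _ h).false
    · simp
  · rw [Finset.sum_apply, finsetSum_coeff] at h
    obtain ⟨i, -, hi⟩ := Finset.exists_ne_zero_of_sum_ne_zero h
    obtain rfl | hic := eq_or_ne i c
    · exact hterms i j e hi
    · exact (hlt i hic j e hi).le

theorem linearIndependent_of_hasLead (hP : ∀ i, HasLead s (P i) i (d i)) :
    LinearIndependent K[X] P := by
  refine Fintype.linearIndependent_iff.2 fun a h => ?_
  by_contra! ha
  obtain ⟨c, -, hc⟩ := hasLead_sum_smul hP (Function.ne_iff.2 ha)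
  exact hc.ne_zero h

theorem le_of_hasLead_of_mem_span (hP : ∀ i, HasLead s (P i) i (d i)) :
    ∀ q ∈ Submodule.span K[X] (Set.range P), ∀ {c e}, HasLead s q c e → d c ≤ e := by
  intro q hq c e h
  obtain ⟨a, rfl⟩ := (Submodule.mem_span_range_iff_exists_fun K[X]).1 hq
  obtain ⟨c', -, h'⟩ := hasLead_sum_smul hP (a := a) (by rintro rfl; exact h.ne_zero (by simp))
  obtain ⟨rfl, rfl⟩ := h'.unique h
  omega

end LeadingRows

theorem eq_zero_of_degree_lt {N : Submodule K[X] (Fin m → K[X])} {d : Fin m → ℕ}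
    (hd : ∀ q ∈ N, ∀ {c e}, HasLead s q c e → d c ≤ e) {q : Fin m → K[X]} (hq : q ∈ N)
    (hdeg : ∀ j, (q j).degree < d j) : q = 0 := by
  by_contra hq0
  obtain ⟨c, e, h⟩ := exists_hasLead (s := s) hq0
  have hlt := hdeg c
  rw [h.degree_eq, Nat.cast_lt] at hlt
  exact (hd q hq h).not_gt hlt

section Division

variable {Q : Fin m → Fin m → K[X]} {d : Fin m → ℕ}

theorem exists_reduced_sub_mem_span (hQ : ∀ i, HasLead s (Q i) i (d i)) (B : ℕ ×ₗ Fin m)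
    (q : Fin m → K[X]) (hq : TermsLT s q B) :
    ∃ r, q - r ∈ Submodule.span K[X] (Set.range Q) ∧ (∀ j, (r j).degree < d j) ∧
      TermsLT s r B := by
  induction B using WellFoundedLT.induction generalizing q with
  | _ B ih =>
  by_cases hq0 : q = 0
  · exact ⟨0, by simp [hq0], by simp, fun j e h => by simp at h⟩
  obtain ⟨j, e, hlead⟩ := exists_hasLead (s := s) hq0
  have hjeB : termKey s j e < B := hq j e hlead.1
  by_cases hde : d j ≤ e
  · obtain ⟨k, rfl⟩ := Nat.exists_eq_add_of_le hde
    let t := monomial k ((q j).coeff (d j + k) / (Q j j).coeff (d j))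
    have ht : TermsLE s (t • Q j) (termKey s j (d j + k)) :=
      ((hQ j).2.smul t).mono
        ((termKey_strictMono j).monotone (by grind [natDegree_monomial_le]))
    have hte : ((t • Q j) j).coeff (d j + k) = (q j).coeff (d j + k) := by
      rw [Pi.smul_apply, smul_eq_mul, coeff_monomial_mul, div_mul_cancel₀ _ (hQ j).1]
    obtain ⟨r, hr, hred, hrB⟩ := ih _ hjeB _ (termsLT_sub_of_hasLead hlead ht hte)
    refine ⟨r, ?_, hred, hrB.trans hjeB⟩
    rw [show q - r = (q - t • Q j - r) + t • Q j by abel]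
    exact add_mem hr (Submodule.smul_mem _ _ (Submodule.subset_span ⟨j, rfl⟩))
  · let w : Fin m → K[X] := Pi.single j (monomial e ((q j).coeff e))
    have hw : HasLead s w j e := by
      simpa only [natDegree_monomial_eq e hlead.1] using
        hasLead_single (s := s) (c := j) (p := monomial e ((q j).coeff e)) (by simpa using hlead.1)
    have hwdeg k : (w k).degree < d k := by
      by_cases hkj : k = j
      · subst hkj
        simpa [w] using (degree_monomial_le _ _).trans_lt
          (by exact_mod_cast not_le.1 hde : (e : WithBot ℕ) < d k)
      · simp [w, hkj]
    obtain ⟨r, hr, hred, hrB⟩ := ih _ hjeB _ (termsLT_sub_of_hasLead hlead hw.2 (by simp [w]))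
    exact ⟨r + w, by rwa [add_comm, ← sub_sub], fun k => (degree_add_le _ _).trans_lt
      (max_lt (hred k) (hwdeg k)), (hrB.le.add hw.2).trans_lt hjeB⟩

theorem exists_popov_row (hQ : ∀ i, HasLead s (Q i) i (d i)) {c : Fin m} (hc : (Q c c).Monic) :
    ∃ p, p - Q c ∈ Submodule.span K[X] (Set.range Q) ∧ HasLead s p c (d c) ∧ (p c).Monic ∧
      ∀ j ≠ c, (p j).degree < d j := by
  let w : Fin m → K[X] := Pi.single c (Q c c)
  have hw : HasLead s w c (d c) := by
    simpa only [w, (hQ c).natDegree_eq] using hasLead_single (s := s) (c := c) hc.ne_zero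
  obtain ⟨r, hr, hred, hrB⟩ := exists_reduced_sub_mem_span hQ _ _
    (termsLT_sub_of_hasLead (hQ c) hw.2 (by simp [w]))
  refine ⟨w + r, ?_, ⟨?_, hw.2.add hrB.le⟩, ?_, fun j hj => by simpa [w, hj] using hred j⟩
  · rw [show w + r - Q c = -(Q c - w - r) by abel]
    exact neg_mem hr
  · rw [Pi.add_apply, coeff_add, coeff_eq_zero_of_degree_lt (hred c), add_zero]
    exact hw.1
  · simpa [w] using hc.add_of_left ((hred c).trans_eq (hQ c).degree_eq.symm)

end Division

theorem isPivotIdx_iff_hasLead {p : Fin m → K[X]} {c : Fin m} (hc : p c ≠ 0) :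
    IsPivotIdx s p c ↔ HasLead s p c (p c).natDegree := by
  let W j : WithBot ℕ := (p j).degree + s j
  have hW {j} (hj : p j ≠ 0) : W j = ((p j).natDegree + s j : ℕ) := by
    simp [W, degree_eq_natDegree hj]
  have hpiv : IsPivotIdx s p c ↔ ∀ j, toLex (W j, j) ≤ toLex (W c, c) := by
    simp only [Prod.Lex.toLex_le_toLex]
    change W c = Finset.univ.sup W ∧ (∀ j, W j = Finset.univ.sup W → j ≤ c) ↔ _
    constructor
    · rintro ⟨hmax, hlast⟩ j
      rw [hmax]
      exact (Finset.le_sup (Finset.mem_univ j)).lt_or_eq.imp_right fun h => ⟨h, hlast j h⟩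
    · intro h
      have hsup : Finset.univ.sup W = W c :=
        le_antisymm (Finset.sup_le fun j _ => (h j).elim le_of_lt fun h => h.1.le)
          (Finset.le_sup (Finset.mem_univ c))
      rw [hsup]
      exact ⟨rfl, fun j hj => ((h j).resolve_left hj.not_lt).2⟩
  have hlead : HasLead s p c (p c).natDegree ↔
      ∀ j, p j ≠ 0 → termKey s j (p j).natDegree ≤ termKey s c (p c).natDegree := by
    refine ⟨fun h j hj => h.2 j _ (by simpa using hj), fun h => ⟨by simpa using hc, ?_⟩⟩
    intro j e he
    have hj : p j ≠ 0 := by rintro h0; simp [h0] at he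
    exact ((termKey_strictMono j).monotone (le_natDegree_of_ne_zero he)).trans (h j hj)
  rw [hpiv, hlead]
  refine forall_congr' fun j => ?_
  rw [Prod.Lex.toLex_le_toLex]
  by_cases hj : p j = 0
  · simp [hj, W, hW hc]
  · simp only [hW hj, hW hc, ne_eq, hj, not_false_eq_true, forall_const, termKey,
      Prod.Lex.toLex_le_toLex]
    norm_cast

theorem isPopov_iff {P : Matrix (Fin m) (Fin m) K[X]} :
    IsPopov s P ↔ ∀ c, (P c c).Monic ∧ HasLead s (P c) c (P c c).natDegree ∧
      ∀ i ≠ c, (P i c).degree < (P c c).natDegree :=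
  forall_congr' fun c => and_congr_right fun hc => by
    rw [isPivotIdx_iff_hasLead hc.ne_zero, degree_eq_natDegree hc.ne_zero]

theorem popov_eq_of_span_eq {P P' : Matrix (Fin m) (Fin m) K[X]} (hP : IsPopov s P)
    (hP' : IsPopov s P')
    (h : Submodule.span K[X] (Set.range P) = Submodule.span K[X] (Set.range P')) : P = P' := by
  rw [isPopov_iff] at hP hP'
  have hlead c := (hP c).2.1
  have hlead' c := (hP' c).2.1
  have hmem c : P c ∈ Submodule.span K[X] (Set.range P) := Submodule.subset_span ⟨c, rfl⟩
  have hmem' c : P' c ∈ Submodule.span K[X] (Set.range P) := h ▸ Submodule.subset_span ⟨c, rfl⟩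
  have hdeg c : (P c c).natDegree = (P' c c).natDegree :=
    le_antisymm (le_of_hasLead_of_mem_span hlead _ (hmem' c) (hlead' c))
      (le_of_hasLead_of_mem_span hlead' _ (h ▸ hmem c) (hlead c))
  funext c
  refine sub_eq_zero.1 (eq_zero_of_degree_lt (le_of_hasLead_of_mem_span hlead)
    (sub_mem (hmem c) (hmem' c)) fun j => ?_)
  obtain rfl | hjc := eq_or_ne j c
  · have hm := (hP j).1
    have hm' := (hP' j).1
    rw [Pi.sub_apply, ← degree_eq_natDegree hm.ne_zero]
    refine degree_sub_lt_left ?_ hm.ne_zero (by rw [hm.leadingCoeff, hm'.leadingCoeff])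
    rw [degree_eq_natDegree hm.ne_zero, degree_eq_natDegree hm'.ne_zero, hdeg]
  · refine (degree_sub_le _ _).trans_lt (max_lt ((hP j).2.2 c hjc.symm) ?_)
    simpa [hdeg] using (hP' j).2.2 c hjc.symm

section Existence

variable {N : Submodule K[X] (Fin m → K[X])}

theorem exists_minimal_monic_rows (hN : ∀ c, ∃ q ∈ N, ∃ e, HasLead s q c e) :
    ∃ d : Fin m → ℕ, (∀ q ∈ N, ∀ {c e}, HasLead s q c e → d c ≤ e) ∧
      ∃ Q : Fin m → Fin m → K[X], ∀ c, Q c ∈ N ∧ HasLead s (Q c) c (d c) ∧ (Q c c).Monic := by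
  classical
  have hN' c : ∃ e, ∃ q ∈ N, HasLead s q c e := by
    obtain ⟨q, hq, e, h⟩ := hN c
    exact ⟨e, q, hq, h⟩
  have hrow c : ∃ q : Fin m → K[X], q ∈ N ∧ HasLead s q c (Nat.find (hN' c)) ∧ (q c).Monic := by
    obtain ⟨q, hq, h⟩ := Nat.find_spec (hN' c)
    have hu : C (q c).leadingCoeff⁻¹ ≠ 0 := by simpa using h.apply_ne_zero
    refine ⟨C (q c).leadingCoeff⁻¹ • q, N.smul_mem _ hq, by simpa using h.smul hu, ?_⟩
    simpa [mul_comm] using monic_mul_leadingCoeff_inv h.apply_ne_zero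
  choose Q hQ using hrow
  exact ⟨fun c => Nat.find (hN' c), fun q hq _ _ h => Nat.find_min' _ ⟨q, hq, h⟩, Q, hQ⟩

theorem span_eq_of_minimal {P : Fin m → Fin m → K[X]} {d : Fin m → ℕ} (hPN : ∀ i, P i ∈ N)
    (hP : ∀ i, HasLead s (P i) i (d i)) (hmin : ∀ q ∈ N, ∀ {c e}, HasLead s q c e → d c ≤ e) :
    Submodule.span K[X] (Set.range P) = N := by
  have hspan : Submodule.span K[X] (Set.range P) ≤ N :=
    Submodule.span_le.2 (Set.range_subset_iff.2 hPN)
  refine le_antisymm hspan fun q hq => ?_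
  obtain rfl | hq0 := eq_or_ne q 0
  · exact zero_mem _
  obtain ⟨B, hB⟩ := exists_termsLT (s := s) hq0
  obtain ⟨r, hr, hred, -⟩ := exists_reduced_sub_mem_span hP B q hB
  have hrN : r ∈ N := by simpa using N.sub_mem hq (hspan hr)
  rwa [eq_zero_of_degree_lt hmin hrN hred, sub_zero] at hr

theorem exists_popov_basis (hN : ∀ c, ∃ q ∈ N, ∃ e, HasLead s q c e) :
    ∃ P : Matrix (Fin m) (Fin m) K[X], LinearIndependent K[X] P ∧
      Submodule.span K[X] (Set.range P) = N ∧ IsPopov s P := by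
  obtain ⟨d, hmin, Q, hQ⟩ := exists_minimal_monic_rows hN
  have hspanQ : Submodule.span K[X] (Set.range Q) ≤ N :=
    Submodule.span_le.2 (Set.range_subset_iff.2 fun c => (hQ c).1)
  choose P hPQ hPlead hPmonic hPdeg using
    fun c => exists_popov_row (fun i => (hQ i).2.1) (hQ c).2.2
  have hPN c : P c ∈ N := by simpa using add_mem (hspanQ (hPQ c)) (hQ c).1
  refine ⟨P, linearIndependent_of_hasLead hPlead, span_eq_of_minimal hPN hPlead hmin,
    isPopov_iff.2 fun c => ?_⟩
  rw [(hPlead c).natDegree_eq]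
  exact ⟨hPmonic c, hPlead c, fun i hi => hPdeg i c hi.symm⟩

end Existence

section Interpolation

variable {σ : ℕ} (E : Matrix (Fin m) (Fin σ) K) (M : Matrix (Fin σ) (Fin σ) K)

def interpolants : Submodule K[X] (Fin m → K[X]) where
  carrier := {q | IsInterpolant E M q}
  zero_mem' := by simp [IsInterpolant]
  add_mem' {p q} hp hq := by
    simp_all [IsInterpolant, Matrix.vecMul_add, Finset.sum_add_distrib]
  smul_mem' a q hq := by
    have h c : E c ᵥ* aeval M ((a • q) c) = (E c ᵥ* aeval M (q c)) ᵥ* aeval M a := by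
      simp [mul_comm a, Matrix.vecMul_vecMul]
    change ∑ c, E c ᵥ* aeval M ((a • q) c) = 0
    rw [Finset.sum_congr rfl fun c _ => h c, ← Matrix.sum_vecMul, hq, Matrix.zero_vecMul]

theorem single_charpoly_mem_interpolants (c : Fin m) :
    Pi.single c M.charpoly ∈ interpolants E M := by
  refine Finset.sum_eq_zero fun i _ => ?_
  obtain rfl | hic := eq_or_ne i c
  · simp [Matrix.aeval_self_charpoly]
  · simp [hic]

theorem isInterpBasis_iff {P : Matrix (Fin m) (Fin m) K[X]} :
    IsInterpBasis E M P ↔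
      LinearIndependent K[X] P ∧ Submodule.span K[X] (Set.range P) = interpolants E M :=
  and_congr Iff.rfl ⟨fun h => SetLike.ext fun q => (h q).symm, fun h q => by rw [h]; rfl⟩

end Interpolation

end PopovForm

/-- among all interpolation bases for `(E,M)`, exactly one is in
`s`-Popov form. -/
theorem existsUnique_popov_interpolation_basis
    {K : Type*} [Field K] {m σ : ℕ}
    (E : Matrix (Fin m) (Fin σ) K) (M : Matrix (Fin σ) (Fin σ) K) (s : Fin m → ℕ) :
    ∃! P : Matrix (Fin m) (Fin m) (Polynomial K),
      IsInterpBasis E M P ∧ IsPopov s P := by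
  have hfull c : ∃ q ∈ PopovForm.interpolants E M, ∃ e, PopovForm.HasLead s q c e :=
    ⟨_, PopovForm.single_charpoly_mem_interpolants E M c, _,
      PopovForm.hasLead_single M.charpoly_monic.ne_zero⟩
  obtain ⟨P, hli, hspan, hP⟩ := PopovForm.exists_popov_basis hfull
  refine ⟨P, ⟨(PopovForm.isInterpBasis_iff E M).2 ⟨hli, hspan⟩, hP⟩, fun P' ⟨hP'basis, hP'⟩ => ?_⟩
  exact PopovForm.popov_eq_of_span_eq hP' hP
    (((PopovForm.isInterpBasis_iff E M).1 hP'basis).2.trans hspan.symm)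
end

section
/- Let M ∈ K^{σ×σ} be upper triangular, E ∈ K^{m×σ}, and partition E = [E^{(1)} | ∗] with E^{(1)} the first ⌊σ/2⌋ columns and M^{(1)}, M^{(2)} the leading and trailing principal submatrices of M of sizes ⌊σ/2⌋ and ⌈σ/2⌉. Suppose P^{(1)} is a 0-minimal interpolation basis for (E^{(1)}, M^{(1)}), that P^{(1)}·E = [0 | E^{(2)}], that P^{(2)} is a 0-minimal interpolation basis for (E^{(2)}, M^{(2)}), and that R^{(2)} is unimodularly equivalent to P^{(2)} and is t-reduced where t = rdeg(P^{(1)}). Then P = R^{(2)} P^{(1)} is a 0-minimal interpolation basis for (E, M). -/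
open Polynomial Matrix

/-- The product `P · E`, whose row `i` is `∑ c (P i c) · (row c of E)`. -/
noncomputable def actSum {K : Type*} [Field K] {m σ : ℕ}
    (M : Matrix (Fin σ) (Fin σ) K) (P : Matrix (Fin m) (Fin m) (Polynomial K))
    (E : Matrix (Fin m) (Fin σ) K) : Matrix (Fin m) (Fin σ) K :=
  Matrix.of fun i => ∑ c, Matrix.vecMul (E c) (Polynomial.aeval M (P i c))

/-- Embedding of the first `⌊σ/2⌋` indices. -/
def emb1 (σ : ℕ) : Fin (σ / 2) → Fin σ := Fin.castLE (Nat.div_le_self σ 2)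

/-- Embedding of the last `⌈σ/2⌉` indices. -/
def emb2 (σ : ℕ) : Fin (σ - σ / 2) → Fin σ :=
  fun i => ⟨σ / 2 + i.1, by have := i.2; omega⟩



lemma sum_split {A : Type*} [AddCommMonoid A] {σ : ℕ} (f : Fin σ → A) :
    ∑ k, f k = (∑ i, f (emb1 σ i)) + ∑ j, f (emb2 σ j) := by
  have h : σ / 2 + (σ - σ / 2) = σ := by omega
  let e : Fin (σ/2) ⊕ Fin (σ - σ/2) ≃ Fin σ := finSumFinEquiv.trans (finCongr h)
  rw [← Fintype.sum_equiv e (fun x => f (e x)) f (fun x => rfl), Fintype.sum_sum_type]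
  congr 1

lemma eq_emb (σ : ℕ) (k : Fin σ) : (∃ i, k = emb1 σ i) ∨ (∃ j, k = emb2 σ j) := by
  rcases lt_or_ge (k : ℕ) (σ / 2) with h | h
  · exact Or.inl ⟨⟨k, h⟩, rfl⟩
  · exact Or.inr ⟨⟨k - σ/2, by have := k.2; omega⟩, by apply Fin.ext; simp [emb2]; omega⟩

lemma isUnit_of_rank_eq {K : Type*} [Field K] {m : ℕ} (A : Matrix (Fin m) (Fin m) K)
    (h : A.rank = m) : IsUnit A := by
  rw [← Matrix.mulVec_surjective_iff_isUnit]
  have hr : LinearMap.range A.mulVecLin = ⊤ := by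
    apply Submodule.eq_top_of_finrank_eq
    rw [Matrix.rank] at h
    simp [h]
  intro y
  have : y ∈ LinearMap.range A.mulVecLin := hr ▸ Submodule.mem_top
  obtain ⟨x, hx⟩ := this
  exact ⟨x, hx⟩

lemma row_ne_zero_of_isUnit {K : Type*} [Field K] {m : ℕ} {A : Matrix (Fin m) (Fin m) K}
    (h : IsUnit A) (i : Fin m) : A i ≠ 0 := by
  intro h0
  obtain ⟨B, hB⟩ := h.exists_right_inv
  have := congrFun (congrFun hB i) i
  rw [Matrix.mul_apply] at this
  simp only [Matrix.one_apply_eq] at this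
  rw [Finset.sum_eq_zero (fun k _ => by simp [congrFun h0 k])] at this
  exact one_ne_zero this.symm

section Tri
variable {K : Type*} [Field K] {σ : ℕ} (M : Matrix (Fin σ) (Fin σ) K)
  (hM : ∀ i j : Fin σ, (j : ℕ) < (i : ℕ) → M i j = 0)

include hM

lemma pow_tri (n : ℕ) : ∀ i j : Fin σ, (j : ℕ) < (i : ℕ) → (M ^ n) i j = 0 := by
  induction n with
  | zero => intro i j h; simp [Matrix.one_apply, Fin.ext_iff]; omega
  | succ n ih =>
    intro i j h
    rw [pow_succ, Matrix.mul_apply]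
    apply Finset.sum_eq_zero
    intro k _
    rcases lt_or_ge (k : ℕ) (i : ℕ) with hk | hk
    · rw [ih i k hk, zero_mul]
    · rw [hM k j (lt_of_lt_of_le h hk), mul_zero]

lemma aeval_tri (p : Polynomial K) : ∀ i j : Fin σ, (j : ℕ) < (i : ℕ) →
    (Polynomial.aeval M p) i j = 0 := by
  intro i j h
  rw [Polynomial.aeval_eq_sum_range]
  rw [Matrix.sum_apply]
  apply Finset.sum_eq_zero
  intro n _
  rw [Matrix.smul_apply, pow_tri M hM n i j h, smul_zero]

lemma pow_sub1 (n : ℕ) :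
    (M.submatrix (emb1 σ) (emb1 σ)) ^ n = (M ^ n).submatrix (emb1 σ) (emb1 σ) := by
  induction n with
  | zero => ext i j; simp [Matrix.one_apply, Fin.ext_iff, emb1]
  | succ n ih =>
    ext i j
    rw [pow_succ, pow_succ, Matrix.mul_apply, ih]
    simp only [Matrix.submatrix_apply, Matrix.mul_apply]
    rw [sum_split (σ := σ) (fun k => (M ^ n) (emb1 σ i) k * M k (emb1 σ j))]
    have h2 : ∀ l : Fin (σ - σ/2), M (emb2 σ l) (emb1 σ j) = 0 := by
      intro l
      apply hM
      simp [emb1, emb2]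
      omega
    have hz : ∑ l : Fin (σ - σ/2), (M ^ n) (emb1 σ i) (emb2 σ l) * M (emb2 σ l) (emb1 σ j) = 0 :=
      Finset.sum_eq_zero (fun l _ => by rw [h2 l, mul_zero])
    rw [hz, add_zero]

lemma pow_sub2 (n : ℕ) :
    (M.submatrix (emb2 σ) (emb2 σ)) ^ n = (M ^ n).submatrix (emb2 σ) (emb2 σ) := by
  induction n with
  | zero => ext i j; simp [Matrix.one_apply, Fin.ext_iff, emb2]
  | succ n ih =>
    ext i j
    rw [pow_succ, pow_succ, Matrix.mul_apply, ih]
    simp only [Matrix.submatrix_apply, Matrix.mul_apply]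
    rw [sum_split (σ := σ) (fun k => (M ^ n) (emb2 σ i) k * M k (emb2 σ j))]
    have h2 : ∀ l : Fin (σ/2), (M ^ n) (emb2 σ i) (emb1 σ l) = 0 := by
      intro l
      apply pow_tri M hM
      simp [emb1, emb2]
      omega
    have hz : ∑ l : Fin (σ/2), (M ^ n) (emb2 σ i) (emb1 σ l) * M (emb1 σ l) (emb2 σ j) = 0 :=
      Finset.sum_eq_zero (fun l _ => by rw [h2 l, zero_mul])
    rw [hz, zero_add]

lemma aeval_sub1 (p : Polynomial K) :
    Polynomial.aeval (M.submatrix (emb1 σ) (emb1 σ)) p =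
      (Polynomial.aeval M p).submatrix (emb1 σ) (emb1 σ) := by
  ext i j
  rw [Polynomial.aeval_eq_sum_range, Polynomial.aeval_eq_sum_range]
  simp only [Matrix.submatrix_apply, Matrix.sum_apply, Matrix.smul_apply]
  apply Finset.sum_congr rfl
  intro n _
  rw [pow_sub1 M hM n]
  rfl

lemma aeval_sub2 (p : Polynomial K) :
    Polynomial.aeval (M.submatrix (emb2 σ) (emb2 σ)) p =
      (Polynomial.aeval M p).submatrix (emb2 σ) (emb2 σ) := by
  ext i j
  rw [Polynomial.aeval_eq_sum_range, Polynomial.aeval_eq_sum_range]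
  simp only [Matrix.submatrix_apply, Matrix.sum_apply, Matrix.smul_apply]
  apply Finset.sum_congr rfl
  intro n _
  rw [pow_sub2 M hM n]
  rfl

end Tri



section Interp
variable {K : Type*} [Field K] {m σ : ℕ} (M : Matrix (Fin σ) (Fin σ) K)
  (hM : ∀ i j : Fin σ, (j : ℕ) < (i : ℕ) → M i j = 0)
  (E : Matrix (Fin m) (Fin σ) K)

lemma interp_iff (q : Fin m → Polynomial K) :
    IsInterpolant E M q ↔ ∀ j, ∑ c, ∑ i, E c i * (Polynomial.aeval M (q c)) i j = 0 := by
  unfold IsInterpolant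
  constructor
  · intro h j
    have := congrFun h j
    rw [Finset.sum_apply] at this
    simpa [Matrix.vecMul, dotProduct] using this
  · intro h
    funext j
    rw [Finset.sum_apply]
    simpa [Matrix.vecMul, dotProduct] using h j

include hM

lemma interp_restrict1 (q : Fin m → Polynomial K) (hq : IsInterpolant E M q) :
    IsInterpolant (E.submatrix id (emb1 σ)) (M.submatrix (emb1 σ) (emb1 σ)) q := by
  rw [interp_iff] at hq ⊢
  intro j
  have key := hq (emb1 σ j)
  have split : ∀ c : Fin m, ∑ k, E c k * (Polynomial.aeval M (q c)) k (emb1 σ j)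
      = ∑ i, E c (emb1 σ i) * (Polynomial.aeval M (q c)) (emb1 σ i) (emb1 σ j) := by
    intro c
    rw [sum_split (σ := σ) (fun k => E c k * (Polynomial.aeval M (q c)) k (emb1 σ j))]
    have hz : ∑ l : Fin (σ - σ/2), E c (emb2 σ l) *
        (Polynomial.aeval M (q c)) (emb2 σ l) (emb1 σ j) = 0 := by
      apply Finset.sum_eq_zero
      intro l _
      rw [aeval_tri M hM (q c) _ _ (by simp [emb1, emb2]; omega), mul_zero]
    rw [hz, add_zero]
  have key2 : ∑ c, ∑ i : Fin (σ/2),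
      E c (emb1 σ i) * (Polynomial.aeval M (q c)) (emb1 σ i) (emb1 σ j) = 0 :=
    (Finset.sum_congr rfl (fun c _ => (split c).symm)).trans key
  rw [← key2]
  apply Finset.sum_congr rfl
  intro c _
  apply Finset.sum_congr rfl
  intro i _
  rw [aeval_sub1 M hM]
  rfl

end Interp

section Transfer
variable {K : Type*} [Field K] {m σ : ℕ} (M : Matrix (Fin σ) (Fin σ) K)
  (E : Matrix (Fin m) (Fin σ) K)

lemma vecMul_sum' {n o ι : Type*} [Fintype n] [Fintype ι] (v : n → K)
    (A : ι → Matrix n o K) :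
    Matrix.vecMul v (∑ i, A i) = ∑ i, Matrix.vecMul v (A i) := by
  funext j
  simp [Matrix.vecMul, dotProduct, Matrix.sum_apply, Finset.mul_sum, Finset.sum_apply]
  rw [Finset.sum_comm]

lemma sum_vecMul' {n o ι : Type*} [Fintype n] [Fintype ι] (v : ι → n → K)
    (A : Matrix n o K) :
    Matrix.vecMul (∑ i, v i) A = ∑ i, Matrix.vecMul (v i) A := by
  funext j
  simp [Matrix.vecMul, dotProduct, Finset.sum_mul, Finset.sum_apply]
  rw [Finset.sum_comm]

lemma actSum_vecMul (P₁ : Matrix (Fin m) (Fin m) (Polynomial K)) (w : Fin m → Polynomial K) :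
    ∑ c, Matrix.vecMul (E c) (Polynomial.aeval M ((Matrix.vecMul w P₁) c)) =
      ∑ k, Matrix.vecMul ((actSum M P₁ E) k) (Polynomial.aeval M (w k)) := by
  have step : ∀ c, Matrix.vecMul (E c) (Polynomial.aeval M ((Matrix.vecMul w P₁) c)) =
      ∑ k, Matrix.vecMul (Matrix.vecMul (E c) (Polynomial.aeval M (P₁ k c)))
        (Polynomial.aeval M (w k)) := by
    intro c
    have h1 : (Matrix.vecMul w P₁) c = ∑ k, P₁ k c * w k := by
      simp [Matrix.vecMul, dotProduct, mul_comm]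
    rw [h1, map_sum, vecMul_sum']
    apply Finset.sum_congr rfl
    intro k _
    rw [_root_.map_mul, ← Matrix.vecMul_vecMul]
  rw [Finset.sum_congr rfl (fun c _ => step c), Finset.sum_comm]
  apply Finset.sum_congr rfl
  intro k _
  have h2 : (actSum M P₁ E) k = ∑ c, Matrix.vecMul (E c) (Polynomial.aeval M (P₁ k c)) := rfl
  rw [h2, sum_vecMul']

variable (hM : ∀ i j : Fin σ, (j : ℕ) < (i : ℕ) → M i j = 0)
include hM

lemma interp_transfer (P₁ : Matrix (Fin m) (Fin m) (Polynomial K))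
    (hzero : ∀ i (j : Fin (σ / 2)), actSum M P₁ E i (emb1 σ j) = 0)
    (w : Fin m → Polynomial K) :
    IsInterpolant E M (Matrix.vecMul w P₁) ↔
      IsInterpolant ((actSum M P₁ E).submatrix id (emb2 σ))
        (M.submatrix (emb2 σ) (emb2 σ)) w := by
  unfold IsInterpolant
  rw [actSum_vecMul M E P₁ w]
  set F := actSum M P₁ E with hF
  have coord : ∀ j : Fin σ, (∑ k, Matrix.vecMul (F k) (Polynomial.aeval M (w k))) j
      = ∑ k, ∑ i, F k i * (Polynomial.aeval M (w k)) i j := by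
    intro j
    rw [Finset.sum_apply]
    rfl
  have hG1 : ∀ j : Fin (σ/2),
      (∑ k, Matrix.vecMul (F k) (Polynomial.aeval M (w k))) (emb1 σ j) = 0 := by
    intro j
    rw [coord]
    apply Finset.sum_eq_zero
    intro k _
    rw [sum_split (σ := σ) (fun i => F k i * (Polynomial.aeval M (w k)) i (emb1 σ j))]
    have hz1 : ∑ i : Fin (σ/2), F k (emb1 σ i) * (Polynomial.aeval M (w k)) (emb1 σ i) (emb1 σ j) = 0 :=
      Finset.sum_eq_zero (fun i _ => by rw [hzero k i, zero_mul])
    have hz2 : ∑ i : Fin (σ - σ/2), F k (emb2 σ i) * (Polynomial.aeval M (w k)) (emb2 σ i) (emb1 σ j) = 0 :=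
      Finset.sum_eq_zero (fun i _ => by
        rw [aeval_tri M hM (w k) _ _ (by simp [emb1, emb2]; omega), mul_zero])
    rw [hz1, hz2, add_zero]
  have hG2 : ∀ j : Fin (σ - σ/2),
      (∑ k, Matrix.vecMul (F k) (Polynomial.aeval M (w k))) (emb2 σ j)
        = (∑ k, Matrix.vecMul ((F.submatrix id (emb2 σ)) k)
            (Polynomial.aeval (M.submatrix (emb2 σ) (emb2 σ)) (w k))) j := by
    intro j
    rw [coord, Finset.sum_apply]
    apply Finset.sum_congr rfl
    intro k _
    rw [sum_split (σ := σ) (fun i => F k i * (Polynomial.aeval M (w k)) i (emb2 σ j))]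
    have hz1 : ∑ i : Fin (σ/2), F k (emb1 σ i) * (Polynomial.aeval M (w k)) (emb1 σ i) (emb2 σ j) = 0 :=
      Finset.sum_eq_zero (fun i _ => by rw [hzero k i, zero_mul])
    rw [hz1, zero_add]
    have : Matrix.vecMul ((F.submatrix id (emb2 σ)) k)
        (Polynomial.aeval (M.submatrix (emb2 σ) (emb2 σ)) (w k)) j
        = ∑ i, F k (emb2 σ i) *
            (Polynomial.aeval (M.submatrix (emb2 σ) (emb2 σ)) (w k)) i j := rfl
    rw [this]
    apply Finset.sum_congr rfl
    intro i _
    rw [aeval_sub2 M hM]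
    rfl
  constructor
  · intro h
    funext j
    rw [← hG2 j]
    rw [h]
    rfl
  · intro h
    funext j
    rcases eq_emb σ j with ⟨i, rfl⟩ | ⟨i, rfl⟩
    · rw [hG1 i]
      rfl
    · rw [hG2 i, h]
      rfl

end Transfer

section Red
variable {K : Type*} [Field K]

lemma le_rowDegW {k m : ℕ} (s : Fin m → ℕ) (P : Matrix (Fin k) (Fin m) (Polynomial K))
    (i : Fin k) (j : Fin m) :
    (P i j).degree + (s j : WithBot ℕ) ≤ rowDegW s P i := by
  unfold rowDegW
  exact Finset.le_sup (f := fun j => (P i j).degree + (s j : WithBot ℕ)) (Finset.mem_univ j)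

lemma rowDegW_le {k m : ℕ} (s : Fin m → ℕ) (P : Matrix (Fin k) (Fin m) (Polynomial K))
    (i : Fin k) (b : WithBot ℕ) (h : ∀ j, (P i j).degree + (s j : WithBot ℕ) ≤ b) :
    rowDegW s P i ≤ b := by
  unfold rowDegW
  exact Finset.sup_le (fun j _ => h j)

lemma coeff_mul_if (a b : Polynomial K) (d e : ℕ)
    (ha : a.degree + (e : WithBot ℕ) ≤ (d : WithBot ℕ)) (hb : b.degree ≤ (e : WithBot ℕ)) :
    (a * b).coeff d =
      (if a.degree + (e : WithBot ℕ) = (d : WithBot ℕ) then a.leadingCoeff else 0) *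
      (if b.degree = (e : WithBot ℕ) then b.leadingCoeff else 0) := by
  have habot : a.degree + (e : WithBot ℕ) = (d : WithBot ℕ) → a.degree ≠ ⊥ := by
    intro h hb'
    rw [hb'] at h
    simp at h
  by_cases ha' : a.degree + (e : WithBot ℕ) = (d : WithBot ℕ)
  · by_cases hb' : b.degree = (e : WithBot ℕ)
    · have hdeg : (a * b).degree = (d : WithBot ℕ) := by
        rw [Polynomial.degree_mul, hb', ha']
      rw [if_pos ha', if_pos hb']
      have hnd : (a * b).natDegree = d := Polynomial.natDegree_eq_of_degree_eq_some hdeg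
      rw [← Polynomial.leadingCoeff_mul, Polynomial.leadingCoeff, hnd]
    · rw [if_neg hb', mul_zero]
      apply Polynomial.coeff_eq_zero_of_degree_lt
      rw [Polynomial.degree_mul]
      calc a.degree + b.degree < a.degree + (e : WithBot ℕ) :=
            WithBot.add_lt_add_left (habot ha') (lt_of_le_of_ne hb hb')
        _ = (d : WithBot ℕ) := ha'
  · rw [if_neg ha', zero_mul]
    apply Polynomial.coeff_eq_zero_of_degree_lt
    rw [Polynomial.degree_mul]
    calc a.degree + b.degree ≤ a.degree + (e : WithBot ℕ) := add_le_add (le_refl _) hb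
      _ < (d : WithBot ℕ) := lt_of_le_of_ne ha ha'

lemma leadMat_mul {m : ℕ} (A B : Matrix (Fin m) (Fin m) (Polynomial K))
    (t : Fin m → ℕ) (hB : ∀ k, rowDegW (fun _ => 0) B k = (t k : WithBot ℕ))
    (hAu : IsUnit (leadMat t A)) (hBu : IsUnit (leadMat (fun _ => 0) B)) :
    leadMat (fun _ => 0) (A * B) = leadMat t A * leadMat (fun _ => 0) B := by
  set L := leadMat t A * leadMat (fun _ => 0) B with hL
  have hLu : IsUnit L := hAu.mul hBu
  have hrowbot : ∀ i, rowDegW t A i ≠ ⊥ := by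
    intro i hbot
    apply row_ne_zero_of_isUnit hAu i
    funext k
    have h1 : (A i k).degree + (t k : WithBot ℕ) ≤ ⊥ := by
      rw [← hbot]
      exact le_rowDegW t A i k
    have h2 : A i k = 0 := by
      have h3 := le_bot_iff.mp h1
      rw [WithBot.add_eq_bot] at h3
      rcases h3 with h | h
      · exact Polynomial.degree_eq_bot.mp h
      · exact absurd h (WithBot.coe_ne_bot)
    simp [leadMat, h2]
  set d : Fin m → ℕ := fun i => WithBot.unbotD 0 (rowDegW t A i) with hdd
  have hd : ∀ i, rowDegW t A i = (d i : WithBot ℕ) := by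
    intro i
    rcases WithBot.ne_bot_iff_exists.mp (hrowbot i) with ⟨n, hn⟩
    have hdn : d i = n := by
      rw [hdd]
      simp [← hn]
    rw [hdn, ← hn]
    rfl
  have bound1 : ∀ i k, (A i k).degree + (t k : WithBot ℕ) ≤ (d i : WithBot ℕ) := by
    intro i k
    rw [← hd i]
    exact le_rowDegW t A i k
  have bound2 : ∀ k j, (B k j).degree ≤ (t k : WithBot ℕ) := by
    intro k j
    have h1 : (B k j).degree + ((0 : ℕ) : WithBot ℕ) ≤ rowDegW (fun _ => 0) B k :=
      le_rowDegW (fun _ => 0) B k j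
    rwa [Nat.cast_zero, add_zero, hB k] at h1
  have coeffC : ∀ i j, ((A * B) i j).coeff (d i) = L i j := by
    intro i j
    rw [Matrix.mul_apply, hL, Matrix.mul_apply, Polynomial.finset_sum_coeff]
    apply Finset.sum_congr rfl
    intro k _
    rw [coeff_mul_if (A i k) (B k j) (d i) (t k) (bound1 i k) (bound2 k j)]
    congr 1
    · simp only [leadMat]
      rw [hd i]
    · simp only [leadMat]
      rw [hB k, Nat.cast_zero, add_zero]
  have degC : ∀ i j, ((A * B) i j).degree ≤ (d i : WithBot ℕ) := by
    intro i j
    rw [Matrix.mul_apply]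
    apply le_trans (Polynomial.degree_sum_le _ _)
    apply Finset.sup_le
    intro k _
    apply le_trans (Polynomial.degree_mul_le _ _)
    calc (A i k).degree + (B k j).degree ≤ (A i k).degree + (t k : WithBot ℕ) :=
          add_le_add (le_refl _) (bound2 k j)
      _ ≤ (d i : WithBot ℕ) := bound1 i k
  have rowC : ∀ i, rowDegW (fun _ => 0) (A * B) i = (d i : WithBot ℕ) := by
    intro i
    apply le_antisymm
    · apply rowDegW_le
      intro j
      rw [Nat.cast_zero, add_zero]
      exact degC i j
    · have hrow : L i ≠ 0 := row_ne_zero_of_isUnit hLu i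
      obtain ⟨j, hj⟩ := Function.ne_iff.mp hrow
      have hc : ((A * B) i j).coeff (d i) ≠ 0 := by
        rw [coeffC i j]
        simpa using hj
      calc (d i : WithBot ℕ) ≤ ((A * B) i j).degree := Polynomial.le_degree_of_ne_zero hc
        _ = ((A * B) i j).degree + ((0 : ℕ) : WithBot ℕ) := by rw [Nat.cast_zero, add_zero]
        _ ≤ rowDegW (fun _ => 0) (A * B) i := le_rowDegW (fun _ => 0) (A * B) i j
  funext i j
  simp only [leadMat]
  rw [rowC i, Nat.cast_zero, add_zero]
  by_cases h : ((A * B) i j).degree = (d i : WithBot ℕ)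
  · rw [if_pos h, ← coeffC i j, Polynomial.leadingCoeff,
      Polynomial.natDegree_eq_of_degree_eq_some h]
  · rw [if_neg h, ← coeffC i j]
    exact (Polynomial.coeff_eq_zero_of_degree_lt (lt_of_le_of_ne (degC i j) h)).symm

end Red

lemma vecMul_eq_sum_smul {R : Type*} [CommRing R] {a b : Type*} [Fintype a]
    (g : a → R) (P : Matrix a b R) : ∑ i, g i • P i = Matrix.vecMul g P := by
  funext c
  simp [Matrix.vecMul, dotProduct, Finset.sum_apply]

lemma mem_span_rows {R : Type*} [CommRing R] {a b : Type*} [Fintype a] (A : Matrix a b R)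
    (q : b → R) :
    q ∈ Submodule.span R (Set.range fun i => A i) ↔ ∃ v, Matrix.vecMul v A = q := by
  rw [show (Set.range fun i => A i) = Set.range A.row from rfl, ← range_vecMulLinear]
  constructor
  · rintro ⟨v, rfl⟩
    exact ⟨v, rfl⟩
  · rintro ⟨v, rfl⟩
    exact ⟨v, rfl⟩

lemma vecMul_eq_zero_of_indep {R : Type*} [CommRing R] {a b : Type*} [Fintype a]
    {P : Matrix a b R} (h : LinearIndependent R (fun i => P i)) (v : a → R)
    (hv : Matrix.vecMul v P = 0) : v = 0 := by
  have h2 : ∑ i, v i • P i = 0 := by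
    rw [vecMul_eq_sum_smul]
    exact hv
  have := Fintype.linearIndependent_iff.mp h v h2
  funext i
  exact this i

/-- divide-and-conquer correctness. With `M` upper triangular,
`P¹` a `0`-minimal interpolation basis for the first half `(E¹, M¹)`,
`P¹·E = [0 | E²]`, `P²` a `0`-minimal interpolation basis for `(E², M²)`, and
`R²` unimodularly equivalent to `P²` and `t`-reduced where `t = rdeg(P¹)`,
the product `R²·P¹` is a `0`-minimal interpolation basis for `(E, M)`. -/
theorem divide_and_conquer_interpolation_basis
    {K : Type*} [Field K] {m σ : ℕ}
    (M : Matrix (Fin σ) (Fin σ) K)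
    (hM : ∀ i j : Fin σ, (j : ℕ) < (i : ℕ) → M i j = 0)
    (E : Matrix (Fin m) (Fin σ) K)
    (P₁ P₂ R₂ : Matrix (Fin m) (Fin m) (Polynomial K))
    (hP₁ : IsInterpBasis (E.submatrix id (emb1 σ)) (M.submatrix (emb1 σ) (emb1 σ)) P₁)
    (hP₁red : IsReducedS (fun _ => 0) P₁)
    (hzero : ∀ i (j : Fin (σ / 2)), actSum M P₁ E i (emb1 σ j) = 0)
    (hP₂ : IsInterpBasis ((actSum M P₁ E).submatrix id (emb2 σ))
      (M.submatrix (emb2 σ) (emb2 σ)) P₂)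
    (hP₂red : IsReducedS (fun _ => 0) P₂)
    (t : Fin m → ℕ) (ht : ∀ i, rowDegW (fun _ => 0) P₁ i = (t i : WithBot ℕ))
    (hR₂equiv : ∃ U : Matrix (Fin m) (Fin m) (Polynomial K), IsUnit U ∧ R₂ = U * P₂)
    (hR₂red : IsReducedS t R₂) :
    IsInterpBasis E M (R₂ * P₁) ∧ IsReducedS (fun _ => 0) (R₂ * P₁) := by
  obtain ⟨U, hU, hUP⟩ := hR₂equiv
  obtain ⟨V, hV1, hV2⟩ := isUnit_iff_exists.mp hU
  have hP₁u : IsUnit (leadMat (fun _ => 0) P₁) := isUnit_of_rank_eq _ hP₁red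
  have hR₂u : IsUnit (leadMat t R₂) := isUnit_of_rank_eq _ hR₂red
  have hP₂R : P₂ = V * R₂ := by
    rw [hUP, ← Matrix.mul_assoc, hV2, Matrix.one_mul]
  constructor
  · constructor
    · rw [Fintype.linearIndependent_iff]
      intro g hg
      have hg' : Matrix.vecMul (Matrix.vecMul g R₂) P₁ = 0 := by
        rw [vecMul_eq_sum_smul] at hg
        rw [Matrix.vecMul_vecMul]
        exact hg
      have h1 : Matrix.vecMul g R₂ = 0 := vecMul_eq_zero_of_indep hP₁.1 _ hg'
      rw [hUP, ← Matrix.vecMul_vecMul] at h1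
      have h2 : Matrix.vecMul g U = 0 := vecMul_eq_zero_of_indep hP₂.1 _ h1
      have h3 : Matrix.vecMul (Matrix.vecMul g U) V = 0 := by
        rw [h2]
        exact Matrix.zero_vecMul V
      rw [Matrix.vecMul_vecMul, hV1, Matrix.vecMul_one] at h3
      intro i
      exact congrFun h3 i
    · intro q
      constructor
      · intro hq
        have h1 := interp_restrict1 M hM E q hq
        obtain ⟨w, hw⟩ := (mem_span_rows P₁ q).mp ((hP₁.2 q).mp h1)
        have h2 : IsInterpolant ((actSum M P₁ E).submatrix id (emb2 σ))
            (M.submatrix (emb2 σ) (emb2 σ)) w := by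
          rw [← interp_transfer M E hM P₁ hzero w, hw]
          exact hq
        obtain ⟨v, hv⟩ := (mem_span_rows P₂ w).mp ((hP₂.2 w).mp h2)
        rw [mem_span_rows]
        refine ⟨Matrix.vecMul v V, ?_⟩
        rw [← Matrix.vecMul_vecMul, Matrix.vecMul_vecMul v V R₂, ← hP₂R, hv, hw]
      · intro hq
        obtain ⟨v, hv⟩ := (mem_span_rows (R₂ * P₁) q).mp hq
        have hq2 : q = Matrix.vecMul (Matrix.vecMul v R₂) P₁ := by
          rw [Matrix.vecMul_vecMul, hv]
        rw [hq2, interp_transfer M E hM P₁ hzero]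
        apply (hP₂.2 _).mpr
        rw [mem_span_rows]
        refine ⟨Matrix.vecMul v U, ?_⟩
        rw [Matrix.vecMul_vecMul, ← hUP]
  · unfold IsReducedS
    rw [leadMat_mul R₂ P₁ t ht hR₂u hP₁u, Matrix.rank_of_isUnit _ (hR₂u.mul hP₁u),
      Fintype.card_fin]
end

section
/- Let s, t ∈ ℕ^m, let P ∈ K[X]^{m×m} be nonsingular and s-reduced, and set d = rdeg_s(P). Then a matrix R ∈ K[X]^{m×m} is an (s+t)-reduced form of P with unimodular transformation U = R·P^{-1} ∈ K[X]^{m×m} if and only if the block matrix [U | R·diag(X^{s})] is a (d,t)-minimal left nullspace basis of the (2m)×m matrix obtained by stacking P·diag(X^{s}) (the j-th column of P multiplied by X^{s_j}) on top of −I_m. -/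
open Polynomial Matrix

/-- The `u`-row degree of row `i` of `P` (general index types). -/
noncomputable def rowDegWG {K : Type*} [Field K] {κ n : Type*} [Fintype n]
    (u : n → ℕ) (P : Matrix κ n (Polynomial K)) (i : κ) : WithBot ℕ :=
  Finset.univ.sup fun j => (P i j).degree + (u j : WithBot ℕ)

/-- The `u`-leading matrix of `P` (general index types). -/
noncomputable def leadMatG {K : Type*} [Field K] {κ n : Type*} [Fintype n]
    [DecidableEq n] (u : n → ℕ) (P : Matrix κ n (Polynomial K)) : Matrix κ n K :=
  fun i j =>
    if (P i j).degree + (u j : WithBot ℕ) = rowDegWG u P i then (P i j).leadingCoeff else 0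

/-- `P` is `u`-reduced: its `u`-leading matrix has full row rank. -/
def IsReducedG {K : Type*} [Field K] {κ n : Type*} [Fintype κ] [Fintype n]
    [DecidableEq n] (u : n → ℕ) (P : Matrix κ n (Polynomial K)) : Prop :=
  (leadMatG u P).rank = Fintype.card κ

/-- `N` is a `u`-minimal (left) nullspace basis of `F`: its rows form a basis of
`{v : v·F = 0}` and `N` is `u`-reduced. -/
def IsMinimalNullspaceBasis {K : Type*} [Field K] {κ n p : Type*}
    [Fintype κ] [Fintype n] [DecidableEq n] [Fintype p]
    (u : n → ℕ) (F : Matrix n p (Polynomial K)) (N : Matrix κ n (Polynomial K)) : Prop :=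
  LinearIndependent (Polynomial K) (fun i : κ => N i) ∧
    (∀ v : n → Polynomial K,
      Matrix.vecMul v F = 0 ↔ v ∈ Submodule.span (Polynomial K) (Set.range fun i : κ => N i)) ∧
    IsReducedG u N



namespace Aux12

variable {K : Type*} [Field K] {m : ℕ}

/-- `u`-degree of a vector of polynomials. -/
noncomputable def vdeg (u : Fin m → ℕ) (v : Fin m → Polynomial K) : WithBot ℕ :=
  Finset.univ.sup fun j => (v j).degree + (u j : WithBot ℕ)

/-- `u`-leading (coefficient) vector. -/
noncomputable def lvec (u : Fin m → ℕ) (v : Fin m → Polynomial K) : Fin m → K :=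
  fun j => if (v j).degree + (u j : WithBot ℕ) = vdeg u v then (v j).leadingCoeff else 0

lemma le_vdeg (u : Fin m → ℕ) (v : Fin m → Polynomial K) (j : Fin m) :
    (v j).degree + (u j : WithBot ℕ) ≤ vdeg u v := by
  exact Finset.le_sup (f := fun j => (v j).degree + (u j : WithBot ℕ)) (Finset.mem_univ j)

lemma coeff_mul_aux (f g : Polynomial K) (e δ : ℕ)
    (hf : f.degree + (e : WithBot ℕ) ≤ (δ : WithBot ℕ)) (hg : g.degree ≤ (e : WithBot ℕ)) :
    (f * g).coeff δ =
      (if f.degree + (e : WithBot ℕ) = (δ : WithBot ℕ) then f.leadingCoeff else 0) *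
        (if g.degree = (e : WithBot ℕ) then g.leadingCoeff else 0) := by
  rcases eq_or_ne f 0 with rfl | hf0
  · simp
  by_cases hfe : f.degree + (e : WithBot ℕ) = (δ : WithBot ℕ)
  · by_cases hge : g.degree = (e : WithBot ℕ)
    · have hg0 : g ≠ 0 := by
        intro h; rw [h, degree_zero] at hge; exact absurd hge (by simp)
      have hfd : f.degree = (f.natDegree : WithBot ℕ) := degree_eq_natDegree hf0
      have hgd : g.natDegree = e := by
        have := hge; rw [degree_eq_natDegree hg0] at this; exact_mod_cast this
      have hfn : f.natDegree + g.natDegree = δ := by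
        rw [hgd]; rw [hfd] at hfe; exact_mod_cast hfe
      rw [if_pos hfe, if_pos hge, ← hfn, coeff_mul_degree_add_degree]
    · have hglt : g.degree < (e : WithBot ℕ) := lt_of_le_of_ne hg hge
      have hdlt : (f * g).degree < (δ : WithBot ℕ) := by
        rw [degree_mul]
        calc f.degree + g.degree < f.degree + (e : WithBot ℕ) := by
              exact WithBot.add_lt_add_left (degree_ne_bot.mpr hf0) hglt
          _ = (δ : WithBot ℕ) := hfe
      rw [coeff_eq_zero_of_degree_lt hdlt, if_neg hge, mul_zero]
  · have hflt : f.degree + (e : WithBot ℕ) < (δ : WithBot ℕ) := lt_of_le_of_ne hf hfe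
    have hdlt : (f * g).degree < (δ : WithBot ℕ) := by
      rw [degree_mul]
      calc f.degree + g.degree ≤ f.degree + (e : WithBot ℕ) := add_le_add_right hg _
        _ < (δ : WithBot ℕ) := hflt
    rw [coeff_eq_zero_of_degree_lt hdlt, if_neg hfe, zero_mul]

end Aux12

namespace Aux12

variable {K : Type*} [Field K] {m : ℕ}

variable (s d : Fin m → ℕ) (P : Matrix (Fin m) (Fin m) (Polynomial K))

lemma coeff_vecMul (hd : ∀ k, vdeg s (P k) = (d k : WithBot ℕ))
    (v : Fin m → Polynomial K) (j : Fin m) (δ : ℕ) (hv : vdeg d v ≤ (δ : WithBot ℕ)) :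
    ((Matrix.vecMul v P) j * X ^ (s j)).coeff δ =
      ∑ k, (if (v k).degree + (d k : WithBot ℕ) = (δ : WithBot ℕ) then (v k).leadingCoeff else 0) *
        (if ((P k j).degree + (s j : WithBot ℕ) = vdeg s (P k)) then (P k j).leadingCoeff else 0) := by
  have hPX : ∀ k, (P k j * X ^ (s j)).degree = (P k j).degree + (s j : WithBot ℕ) := by
    intro k; rw [degree_mul, degree_X_pow]
  have hexp : Matrix.vecMul v P j * X ^ (s j) = ∑ k, v k * (P k j * X ^ (s j)) := by
    rw [Matrix.vecMul, dotProduct, Finset.sum_mul]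
    simp [mul_assoc]
  rw [hexp, finset_sum_coeff]
  refine Finset.sum_congr rfl fun k _ => ?_
  have h1 : (v k).degree + (d k : WithBot ℕ) ≤ (δ : WithBot ℕ) :=
    le_trans (le_vdeg d v k) hv
  have h2 : (P k j * X ^ (s j)).degree ≤ (d k : WithBot ℕ) := by
    rw [hPX k, ← hd k]; exact le_vdeg s (P k) j
  rw [coeff_mul_aux _ _ _ _ h1 h2]
  congr 1
  rw [hPX k, hd k]
  by_cases h : (P k j).degree + (s j : WithBot ℕ) = (d k : WithBot ℕ)
  · rw [if_pos h, if_pos h, leadingCoeff_mul, leadingCoeff_X_pow, mul_one]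
  · rw [if_neg h, if_neg h]

lemma vdeg_vecMul_le (hd : ∀ k, vdeg s (P k) = (d k : WithBot ℕ))
    (v : Fin m → Polynomial K) (j : Fin m) :
    (Matrix.vecMul v P j * X ^ (s j)).degree ≤ vdeg d v := by
  have hexp : Matrix.vecMul v P j * X ^ (s j) = ∑ k, v k * (P k j * X ^ (s j)) := by
    rw [Matrix.vecMul, dotProduct, Finset.sum_mul]
    simp [mul_assoc]
  rw [hexp]
  refine le_trans (degree_sum_le _ _) (Finset.sup_le fun k _ => ?_)
  refine le_trans (degree_mul_le _ _) ?_
  refine le_trans ?_ (le_vdeg d v k)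
  refine add_le_add_right ?_ _
  rw [degree_mul, degree_X_pow, ← hd k]
  exact le_vdeg s (P k) j

end Aux12

namespace Aux12

variable {K : Type*} [Field K] {m : ℕ}

lemma isUnit_det_of_rank_eq (A : Matrix (Fin m) (Fin m) K) (h : A.rank = m) :
    IsUnit A.det := by
  rw [isUnit_iff_ne_zero]
  intro hdet
  obtain ⟨v, hv0, hv⟩ := (Matrix.exists_mulVec_eq_zero_iff).mpr hdet
  have hker : v ∈ LinearMap.ker A.mulVecLin := by
    rw [LinearMap.mem_ker, Matrix.mulVecLin_apply, hv]
  have hkpos : 0 < Module.finrank K (LinearMap.ker A.mulVecLin) := by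
    rw [Module.finrank_pos_iff_exists_ne_zero]
    exact ⟨⟨v, hker⟩, by simpa using hv0⟩
  have hrn := LinearMap.finrank_range_add_finrank_ker A.mulVecLin
  rw [Module.finrank_fintype_fun_eq_card, Fintype.card_fin] at hrn
  rw [Matrix.rank] at h
  omega

variable (s d : Fin m → ℕ) (P : Matrix (Fin m) (Fin m) (Polynomial K))

lemma vdeg_eq_bot_iff (u : Fin m → ℕ) (v : Fin m → Polynomial K) :
    vdeg u v = ⊥ ↔ v = 0 := by
  constructor
  · intro h
    funext k
    have := le_vdeg u v k
    rw [h, le_bot_iff] at this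
    have hvk : (v k).degree = ⊥ := by
      rcases (WithBot.add_eq_bot).mp this with h1 | h1
      · exact h1
      · exact absurd h1 (by simp)
    simpa [degree_eq_bot] using hvk
  · intro h
    subst h
    rw [vdeg]
    simp

lemma pdp (hd : ∀ k, vdeg s (P k) = (d k : WithBot ℕ))
    (hA : IsUnit (Matrix.of fun k j => if ((P k j).degree + (s j : WithBot ℕ) = vdeg s (P k)) then (P k j).leadingCoeff else 0 : Matrix (Fin m) (Fin m) K).det)
    (v : Fin m → Polynomial K) :
    vdeg s (Matrix.vecMul v P) = vdeg d v ∧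
      lvec s (Matrix.vecMul v P) =
        Matrix.vecMul (lvec d v)
          (Matrix.of fun k j => if ((P k j).degree + (s j : WithBot ℕ) = vdeg s (P k)) then (P k j).leadingCoeff else 0) := by
  set A : Matrix (Fin m) (Fin m) K :=
    Matrix.of fun k j => if ((P k j).degree + (s j : WithBot ℕ) = vdeg s (P k)) then (P k j).leadingCoeff else 0 with hAdef
  set w := Matrix.vecMul v P with hw
  have hdegX : ∀ j, (w j * X ^ (s j)).degree = (w j).degree + (s j : WithBot ℕ) := by
    intro j; rw [degree_mul, degree_X_pow]
  have hle : vdeg s w ≤ vdeg d v := by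
    refine Finset.sup_le fun j _ => ?_
    rw [← hdegX j]
    exact vdeg_vecMul_le s d P hd v j
  rcases hbot : vdeg d v with _ | δ
  · -- v = 0
    have hv0 : v = 0 := (vdeg_eq_bot_iff d v).mp hbot
    subst hv0
    have hw0 : w = 0 := by rw [hw]; simp [Matrix.vecMul]
    constructor
    · rw [hw0, (vdeg_eq_bot_iff s (0 : Fin m → Polynomial K)).mpr rfl]; rfl
    · funext j
      rw [hw0]
      rw [show lvec d (0 : Fin m → Polynomial K) = 0 from funext fun k => by rw [lvec]; split_ifs <;> simp]; rw [lvec]; split_ifs <;> simp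
  · -- vdeg d v = δ
    have hvδ : vdeg d v ≤ (δ : WithBot ℕ) := le_of_eq hbot
    have hcoeff : ∀ j, (w j * X ^ (s j)).coeff δ = Matrix.vecMul (lvec d v) A j := by
      intro j
      rw [hw, coeff_vecMul s d P hd v j δ hvδ, Matrix.vecMul, dotProduct]
      refine Finset.sum_congr rfl fun k _ => ?_
      congr 1
      rw [lvec, hbot]
      rfl
    -- nonzero coefficient at some j
    have hlv_ne : lvec d v ≠ 0 := by
      have hne : (Finset.univ : Finset (Fin m)).Nonempty := by
        by_contra hne
        rw [Finset.not_nonempty_iff_eq_empty] at hne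
        rw [vdeg, hne] at hbot
        simp at hbot
      obtain ⟨k, _, hk⟩ := Finset.exists_mem_eq_sup (Finset.univ : Finset (Fin m)) hne
        (fun j => (v j).degree + (d j : WithBot ℕ))
      have hkeq : (v k).degree + (d k : WithBot ℕ) = vdeg d v := by rw [vdeg, ← hk]
      have hvk0 : v k ≠ 0 := by
        intro h
        rw [h, degree_zero, WithBot.bot_add, hbot] at hkeq
        exact absurd hkeq (by simp)
      intro hzero
      have := congrFun hzero k
      rw [lvec, if_pos hkeq] at this
      exact hvk0 (leadingCoeff_eq_zero.mp this)
    have hc_ne : Matrix.vecMul (lvec d v) A ≠ 0 := by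
      intro hzero
      apply hlv_ne
      calc lvec d v = Matrix.vecMul (lvec d v) (A * A⁻¹) := by
            rw [Matrix.mul_nonsing_inv A hA, Matrix.vecMul_one]
        _ = Matrix.vecMul (Matrix.vecMul (lvec d v) A) A⁻¹ := by rw [Matrix.vecMul_vecMul]
        _ = 0 := by rw [hzero]; simp
    have hge : (δ : WithBot ℕ) ≤ vdeg s w := by
      obtain ⟨j, hj⟩ := Function.ne_iff.mp hc_ne
      have : (δ : WithBot ℕ) ≤ (w j * X ^ (s j)).degree :=
        le_degree_of_ne_zero (by rw [hcoeff j]; simpa using hj)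
      rw [hdegX j] at this
      exact le_trans this (le_vdeg s w j)
    have hmain : vdeg s w = (δ : WithBot ℕ) := le_antisymm (le_trans hle (le_of_eq hbot)) hge
    refine ⟨by rw [WithBot.some_eq_coe]; exact hmain, ?_⟩
    funext j
    rw [lvec, hmain]
    by_cases hj : (w j).degree + (s j : WithBot ℕ) = (δ : WithBot ℕ)
    · rw [if_pos hj, ← hcoeff j]
      have hwj0 : w j ≠ 0 := by
        intro h
        rw [h, degree_zero, WithBot.bot_add] at hj
        exact absurd hj (by simp)
      have hX0 : w j * X ^ (s j) ≠ 0 := by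
        exact mul_ne_zero hwj0 (pow_ne_zero _ X_ne_zero)
      have hdeg : (w j * X ^ (s j)).degree = (δ : WithBot ℕ) := by rw [hdegX j, hj]
      have hnd : (w j * X ^ (s j)).natDegree = δ := natDegree_eq_of_degree_eq_some hdeg
      rw [← hnd, coeff_natDegree, leadingCoeff_mul, leadingCoeff_X_pow, mul_one]
    · rw [if_neg hj, ← hcoeff j]
      have hlt : (w j * X ^ (s j)).degree < (δ : WithBot ℕ) := by
        rw [hdegX j]
        exact lt_of_le_of_ne (hmain ▸ le_vdeg s w j) hj
      rw [coeff_eq_zero_of_degree_lt hlt]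

end Aux12

set_option linter.unusedSectionVars false

namespace Aux12

variable {K : Type*} [Field K] {m : ℕ}

lemma sup_sum (f : (Fin m ⊕ Fin m) → WithBot ℕ) :
    Finset.univ.sup f =
      (Finset.univ.sup fun j => f (Sum.inl j)) ⊔ (Finset.univ.sup fun j => f (Sum.inr j)) := by
  apply le_antisymm
  · refine Finset.sup_le ?_
    rintro (j | j) _
    · exact le_trans (Finset.le_sup (f := fun j => f (Sum.inl j)) (Finset.mem_univ j)) le_sup_left
    · exact le_trans (Finset.le_sup (f := fun j => f (Sum.inr j)) (Finset.mem_univ j)) le_sup_right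
  · exact sup_le (Finset.sup_le fun j _ => Finset.le_sup (Finset.mem_univ (Sum.inl j)))
      (Finset.sup_le fun j _ => Finset.le_sup (Finset.mem_univ (Sum.inr j)))

lemma deg_mul_X_pow_add (p : Polynomial K) (n q : ℕ) :
    (p * X ^ n).degree + (q : WithBot ℕ) = p.degree + ((n + q : ℕ) : WithBot ℕ) := by
  rw [degree_mul, degree_X_pow, Nat.cast_add, add_assoc]

lemma vdeg_le_add (u w : Fin m → ℕ) (v : Fin m → Polynomial K) :
    vdeg u v ≤ vdeg (fun j => u j + w j) v := by
  refine Finset.sup_le fun j _ => le_trans ?_ (le_vdeg _ v j)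
  exact add_le_add_right (by exact_mod_cast Nat.le_add_right _ _) _

lemma mul_apply_vecMul {α : Type*} [CommRing α] {a b c : Type*} [Fintype b]
    (B : Matrix a b α) (C : Matrix b c α)
    (i : a) (j : c) : (B * C) i j = Matrix.vecMul (B i) C j := by
  simp [Matrix.mul_apply, Matrix.vecMul, dotProduct]

lemma row_mul {α : Type*} [CommRing α] {a b c : Type*} [Fintype b]
    (B : Matrix a b α) (C : Matrix b c α) (i : a) :
    (B * C) i = Matrix.vecMul (B i) C :=
  funext fun j => mul_apply_vecMul B C i j

section Main

variable (s t d : Fin m → ℕ) (P U R : Matrix (Fin m) (Fin m) (Polynomial K))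

lemma lm_eq_of : leadMatG s P =
    (Matrix.of fun k j => if ((P k j).degree + (s j : WithBot ℕ) = vdeg s (P k))
      then (P k j).leadingCoeff else 0 : Matrix (Fin m) (Fin m) K) := rfl

variable (hd : ∀ k, vdeg s (P k) = (d k : WithBot ℕ))
  (hA : IsUnit (leadMatG s P).det) (hR : R = U * P)

include hd hA hR

lemma row_R : ∀ i, R i = Matrix.vecMul (U i) P := by
  intro i
  funext j
  rw [hR]
  simp [Matrix.mul_apply, Matrix.vecMul, dotProduct]

lemma vdeg_U_eq : ∀ i, vdeg s (R i) = vdeg d (U i) := by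
  intro i
  rw [row_R s d P U R hd hA hR i]
  exact (pdp s d P hd (lm_eq_of s P ▸ hA) (U i)).1

lemma lvec_R_eq : ∀ i, lvec s (R i) = Matrix.vecMul (lvec d (U i)) (leadMatG s P) := by
  intro i
  rw [row_R s d P U R hd hA hR i, lm_eq_of s P]
  exact (pdp s d P hd (lm_eq_of s P ▸ hA) (U i)).2

lemma rowDeg_N : ∀ i,
    rowDegWG (Sum.elim d t)
      (Matrix.fromCols U (R * Matrix.diagonal fun j => (X : Polynomial K) ^ (s j))) i =
      vdeg (fun j => s j + t j) (R i) := by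
  intro i
  rw [rowDegWG, sup_sum]
  have hl : (Finset.univ.sup fun j =>
      ((Matrix.fromCols U (R * Matrix.diagonal fun j => (X : Polynomial K) ^ (s j))) i
        (Sum.inl j)).degree + ((Sum.elim d t (Sum.inl j) : ℕ) : WithBot ℕ)) = vdeg d (U i) := by
    rw [vdeg]
    refine Finset.sup_congr rfl fun j _ => ?_
    rw [Matrix.fromCols_apply_inl, Sum.elim_inl]
  have hr : (Finset.univ.sup fun j =>
      ((Matrix.fromCols U (R * Matrix.diagonal fun j => (X : Polynomial K) ^ (s j))) i
        (Sum.inr j)).degree + ((Sum.elim d t (Sum.inr j) : ℕ) : WithBot ℕ)) =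
      vdeg (fun j => s j + t j) (R i) := by
    rw [vdeg]
    refine Finset.sup_congr rfl fun j _ => ?_
    rw [Matrix.fromCols_apply_inr, Sum.elim_inr, Matrix.mul_diagonal,
      deg_mul_X_pow_add]
  show _ ⊔ _ = _
  rw [hl, hr, ← vdeg_U_eq s d P U R hd hA hR i]
  exact sup_eq_right.mpr (vdeg_le_add s t (R i))

lemma key_lm :
    leadMatG (Sum.elim d t)
      (Matrix.fromCols U (R * Matrix.diagonal fun j => (X : Polynomial K) ^ (s j))) =
    leadMatG (fun j => s j + t j) R *
      Matrix.fromCols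
        ((Matrix.diagonal fun j => if t j = 0 then (1 : K) else 0) * (leadMatG s P)⁻¹)
        (1 : Matrix (Fin m) (Fin m) K) := by
  set E : Matrix (Fin m) (Fin m) K := Matrix.diagonal fun j => if t j = 0 then (1 : K) else 0
    with hE
  set A : Matrix (Fin m) (Fin m) K := leadMatG s P with hAdef
  rw [Matrix.mul_fromCols, Matrix.mul_one]
  apply Matrix.ext
  rintro i (j | j)
  · -- left block
    rw [Matrix.fromCols_apply_inl, ← Matrix.mul_assoc, mul_apply_vecMul]
    have hrow2 : (leadMatG (fun j => s j + t j) R * E) i =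
        Matrix.vecMul (leadMatG (fun j => s j + t j) R i) E :=
      funext fun j => mul_apply_vecMul _ _ i j
    rw [hrow2]
    have hLHS : leadMatG (Sum.elim d t)
        (Matrix.fromCols U (R * Matrix.diagonal fun j => (X : Polynomial K) ^ (s j))) i
          (Sum.inl j) =
        if (U i j).degree + (d j : WithBot ℕ) = vdeg (fun j => s j + t j) (R i)
          then (U i j).leadingCoeff else 0 := by
      rw [leadMatG, rowDeg_N s t d P U R hd hA hR i, Matrix.fromCols_apply_inl, Sum.elim_inl]
    rw [hLHS]
    have hle2 : vdeg s (R i) ≤ vdeg (fun j => s j + t j) (R i) := vdeg_le_add s t (R i)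
    rcases eq_or_lt_of_le hle2 with heq | hlt
    · -- equal row degrees
      have hstep1 : Matrix.vecMul (leadMatG (fun j => s j + t j) R i) E = lvec s (R i) := by
        funext k
        rw [Matrix.vecMul_diagonal]
        by_cases htk : t k = 0
        · rw [if_pos htk, mul_one]
          show (if (R i k).degree + ((s k + t k : ℕ) : WithBot ℕ) =
              rowDegWG (fun j => s j + t j) R i then (R i k).leadingCoeff else 0) = _
          have : rowDegWG (fun j => s j + t j) R i = vdeg (fun j => s j + t j) (R i) := rfl
          rw [this, lvec, ← heq, htk, Nat.add_zero]
        · rw [if_neg htk, mul_zero]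
          by_cases hRik : R i k = 0
          · rw [lvec, hRik]
            split_ifs <;> simp
          · symm
            rw [lvec, if_neg]
            intro hcond
            have h1 : (R i k).degree + ((s k + t k : ℕ) : WithBot ℕ) ≤
                vdeg (fun j => s j + t j) (R i) := le_vdeg (fun j => s j + t j) (R i) k
            rw [← heq, ← hcond, degree_eq_natDegree hRik] at h1
            have h2 : (R i k).natDegree + (s k + t k) ≤ (R i k).natDegree + s k := by
              exact_mod_cast h1
            omega
      rw [hstep1, lvec_R_eq s d P U R hd hA hR i, Matrix.vecMul_vecMul,
        Matrix.mul_nonsing_inv _ (hAdef ▸ hA), Matrix.vecMul_one]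
      rw [← heq, vdeg_U_eq s d P U R hd hA hR i]
      rfl
    · -- strictly smaller
      have hstep0 : Matrix.vecMul (leadMatG (fun j => s j + t j) R i) E = 0 := by
        funext k
        rw [Matrix.vecMul_diagonal]
        by_cases htk : t k = 0
        · rw [if_pos htk, mul_one]
          show (if (R i k).degree + ((s k + t k : ℕ) : WithBot ℕ) =
              rowDegWG (fun j => s j + t j) R i then (R i k).leadingCoeff else 0) = _
          rw [if_neg]
          · rfl
          intro hcond
          have h1 : (R i k).degree + ((s k + t k : ℕ) : WithBot ℕ) ≤ vdeg s (R i) := by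
            rw [htk, Nat.add_zero]
            exact le_vdeg s (R i) k
          have : rowDegWG (fun j => s j + t j) R i = vdeg (fun j => s j + t j) (R i) := rfl
          rw [this] at hcond
          rw [hcond] at h1
          exact absurd hlt (not_lt.mpr h1)
        · rw [if_neg htk, mul_zero]
          rfl
      rw [hstep0, Matrix.zero_vecMul]
      rw [if_neg]
      · rfl
      intro hcond
      have h1 : (U i j).degree + (d j : WithBot ℕ) ≤ vdeg d (U i) := le_vdeg d (U i) j
      rw [hcond, ← vdeg_U_eq s d P U R hd hA hR i] at h1
      exact absurd hlt (not_lt.mpr h1)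
  · -- right block
    rw [Matrix.fromCols_apply_inr]
    have hLHS : leadMatG (Sum.elim d t)
        (Matrix.fromCols U (R * Matrix.diagonal fun j => (X : Polynomial K) ^ (s j))) i
          (Sum.inr j) =
        if (R i j * X ^ (s j)).degree + (t j : WithBot ℕ) = vdeg (fun j => s j + t j) (R i)
          then (R i j * X ^ (s j)).leadingCoeff else 0 := by
      rw [leadMatG, rowDeg_N s t d P U R hd hA hR i, Matrix.fromCols_apply_inr, Sum.elim_inr,
        Matrix.mul_diagonal]
    rw [hLHS, deg_mul_X_pow_add]
    show _ = if (R i j).degree + ((s j + t j : ℕ) : WithBot ℕ) =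
        rowDegWG (fun j => s j + t j) R i then (R i j).leadingCoeff else 0
    have : rowDegWG (fun j => s j + t j) R i = vdeg (fun j => s j + t j) (R i) := rfl
    rw [this]
    by_cases hcond : (R i j).degree + ((s j + t j : ℕ) : WithBot ℕ) =
        vdeg (fun j => s j + t j) (R i)
    · rw [if_pos hcond, if_pos hcond, leadingCoeff_mul, leadingCoeff_X_pow, mul_one]
    · rw [if_neg hcond, if_neg hcond]

lemma rank_lm_eq :
    (leadMatG (Sum.elim d t)
      (Matrix.fromCols U (R * Matrix.diagonal fun j => (X : Polynomial K) ^ (s j)))).rank =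
    (leadMatG (fun j => s j + t j) R).rank := by
  apply le_antisymm
  · rw [key_lm s t d P U R hd hA hR]
    exact Matrix.rank_mul_le_left _ _
  · have h2 : leadMatG (fun j => s j + t j) R =
        leadMatG (Sum.elim d t)
          (Matrix.fromCols U (R * Matrix.diagonal fun j => (X : Polynomial K) ^ (s j))) *
          Matrix.fromRows (0 : Matrix (Fin m) (Fin m) K) (1 : Matrix (Fin m) (Fin m) K) := by
      rw [key_lm s t d P U R hd hA hR, Matrix.mul_assoc, Matrix.fromCols_mul_fromRows]
      simp
    conv_lhs => rw [h2]
    exact Matrix.rank_mul_le_left _ _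

end Main

end Aux12
/-- `R` is an `(s+t)`-reduced form of `P` with unimodular transformation
`U = R·P⁻¹` iff `[U | R·diag(X^s)]` is a `(d,t)`-minimal nullspace basis of the stacked
matrix `[P·diag(X^s) over −I]`, where `d = rdeg_s(P)`. -/
theorem shifted_reduced_form_iff_minimal_nullspace_basis
    {K : Type*} [Field K] {m : ℕ} (s t : Fin m → ℕ)
    (P : Matrix (Fin m) (Fin m) (Polynomial K))
    (hPns : P.det ≠ 0) (hPred : IsReducedG s P)
    (d : Fin m → ℕ) (hd : ∀ i, rowDegWG s P i = (d i : WithBot ℕ))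
    (U R : Matrix (Fin m) (Fin m) (Polynomial K)) :
    (IsUnit U ∧ R = U * P ∧ IsReducedG (fun i => s i + t i) R) ↔
      IsMinimalNullspaceBasis (Sum.elim d t)
        (Matrix.fromRows
          (P * Matrix.diagonal fun j => (Polynomial.X : Polynomial K) ^ (s j))
          (-(1 : Matrix (Fin m) (Fin m) (Polynomial K))))
        (Matrix.fromCols U
          (R * Matrix.diagonal fun j => (Polynomial.X : Polynomial K) ^ (s j))) := by
  classical
  set D : Matrix (Fin m) (Fin m) (Polynomial K) :=
    Matrix.diagonal fun j => (X : Polynomial K) ^ (s j) with hD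
  set N : Matrix (Fin m) (Fin m ⊕ Fin m) (Polynomial K) := Matrix.fromCols U (R * D) with hN
  set F : Matrix (Fin m ⊕ Fin m) (Fin m) (Polynomial K) :=
    Matrix.fromRows (P * D) (-(1 : Matrix (Fin m) (Fin m) (Polynomial K))) with hF
  have hd' : ∀ k, Aux12.vdeg s (P k) = (d k : WithBot ℕ) := hd
  have hA : IsUnit (leadMatG s P).det :=
    Aux12.isUnit_det_of_rank_eq _ (hPred.trans (Fintype.card_fin m))
  have hvecF : ∀ v : (Fin m ⊕ Fin m) → Polynomial K,
      Matrix.vecMul v F =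
        Matrix.vecMul (fun j => v (Sum.inl j)) (P * D) - (fun j => v (Sum.inr j)) := by
    intro v
    have hv : v = Sum.elim (fun j => v (Sum.inl j)) (fun j => v (Sum.inr j)) :=
      funext fun x => by cases x <;> rfl
    conv_lhs => rw [hv]
    rw [hF, Matrix.sumElim_vecMul_fromRows, Matrix.vecMul_neg, Matrix.vecMul_one]
    rw [sub_eq_add_neg]
  have hsum : ∀ (c : Fin m → Polynomial K) (x : Fin m ⊕ Fin m),
      (∑ i, c i • (N i : (Fin m ⊕ Fin m) → Polynomial K)) x = Matrix.vecMul c N x := by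
    intro c x
    rw [Finset.sum_apply]
    simp [Matrix.vecMul, dotProduct]
  have hND : ∀ (i : Fin m), ((U * (P * D)) i) = Matrix.vecMul (U i) (P * D) :=
    fun i => Aux12.row_mul U (P * D) i
  constructor
  · rintro ⟨hU, hRUP, hRred⟩
    obtain ⟨Uu, hUu⟩ := hU
    set V : Matrix (Fin m) (Fin m) (Polynomial K) := (Uu⁻¹ : (Matrix (Fin m) (Fin m) (Polynomial K))ˣ).val with hV
    have hUV : U * V = 1 := by rw [← hUu, hV]; exact Uu.mul_inv
    have hVU : V * U = 1 := by rw [← hUu, hV]; exact Uu.inv_mul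
    have hRD : R * D = U * (P * D) := by rw [hRUP, Matrix.mul_assoc]
    refine ⟨?_, ?_, ?_⟩
    · -- linear independence
      rw [Fintype.linearIndependent_iff]
      intro c hc i
      have hcU : Matrix.vecMul c U = 0 := by
        funext j
        have := congrFun hc (Sum.inl j)
        rw [hsum c (Sum.inl j)] at this
        rw [hN, Matrix.vecMul_fromCols] at this
        simpa using this
      have hc0 : c = 0 := by
        have : Matrix.vecMul c (U * V) = 0 := by
          rw [← Matrix.vecMul_vecMul, hcU, Matrix.zero_vecMul]
        rwa [hUV, Matrix.vecMul_one] at this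
      rw [hc0]; rfl
    · -- span characterization
      intro v
      constructor
      · intro hvF
        rw [hvecF v, sub_eq_zero] at hvF
        refine (Submodule.mem_span_range_iff_exists_fun _).mpr
          ⟨Matrix.vecMul (fun j => v (Sum.inl j)) V, ?_⟩
        funext x
        rw [hsum]
        have hwU : Matrix.vecMul (Matrix.vecMul (fun j => v (Sum.inl j)) V) U =
            fun j => v (Sum.inl j) := by
          rw [Matrix.vecMul_vecMul, hVU, Matrix.vecMul_one]
        rw [hN, Matrix.vecMul_fromCols]
        cases x with
        | inl j => rw [Sum.elim_inl, hwU]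
        | inr j =>
          rw [Sum.elim_inr, hRD, ← Matrix.vecMul_vecMul, hwU]
          exact congrFun hvF j
      · intro hv
        have hker : Submodule.span (Polynomial K) (Set.range fun i : Fin m => N i) ≤
            LinearMap.ker (Matrix.vecMulLinear F) := by
          rw [Submodule.span_le]
          rintro _ ⟨i, rfl⟩
          rw [SetLike.mem_coe, LinearMap.mem_ker, Matrix.vecMulLinear_apply]
          rw [hvecF (N i), sub_eq_zero]
          have h1 : (fun j => N i (Sum.inl j)) = U i := by
            funext j; rw [hN, Matrix.fromCols_apply_inl]
          have h2 : (fun j => N i (Sum.inr j)) = (R * D) i := by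
            funext j; rw [hN, Matrix.fromCols_apply_inr]
          rw [h1, h2, hRD, hND i]
        have := hker hv
        rwa [LinearMap.mem_ker, Matrix.vecMulLinear_apply] at this
    · -- reducedness of N
      show (leadMatG (Sum.elim d t) N).rank = Fintype.card (Fin m)
      rw [hN, hD, Aux12.rank_lm_eq s t d P U R hd' hA hRUP]
      exact hRred
  · rintro ⟨hli, hspan, hred⟩
    -- rows of N are in the nullspace
    have hrowsnull : ∀ i, Matrix.vecMul (N i) F = 0 := fun i =>
      (hspan (N i)).mpr (Submodule.subset_span ⟨i, rfl⟩)
    have hRDrow : ∀ i, Matrix.vecMul (U i) (P * D) = (R * D) i := by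
      intro i
      have := hrowsnull i
      rw [hvecF (N i), sub_eq_zero] at this
      have h1 : (fun j => N i (Sum.inl j)) = U i := by
        funext j; rw [hN, Matrix.fromCols_apply_inl]
      have h2 : (fun j => N i (Sum.inr j)) = (R * D) i := by
        funext j; rw [hN, Matrix.fromCols_apply_inr]
      rw [h1, h2] at this
      exact this
    have hRUP : R = U * P := by
      have hmat : (U * P) * D = R * D := by
        apply Matrix.ext
        intro i j
        have := congrFun (hRDrow i) j
        rw [← hND i, ← Matrix.mul_assoc] at this
        exact this
      have hsub : ((U * P) - R) * D = 0 := by rw [Matrix.sub_mul, hmat, sub_self]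
      have hz : (U * P) - R = 0 := by
        apply Matrix.ext
        intro i j
        have := congrFun (congrFun hsub i) j
        rw [hD, Matrix.mul_diagonal] at this
        rcases mul_eq_zero.mp this with h | h
        · exact h
        · exact absurd h (pow_ne_zero _ X_ne_zero)
      exact (sub_eq_zero.mp hz).symm
    have hUnit : IsUnit U := by
      set vk : Fin m → (Fin m ⊕ Fin m) → Polynomial K := fun k =>
        Sum.elim (Pi.single k (1 : Polynomial K))
          (Matrix.vecMul (Pi.single k (1 : Polynomial K)) (P * D)) with hvk
      have hvknull : ∀ k, Matrix.vecMul (vk k) F = 0 := by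
        intro k
        rw [hvecF (vk k)]
        have h1 : (fun j => vk k (Sum.inl j)) = Pi.single k (1 : Polynomial K) := by
          funext j; rfl
        have h2 : (fun j => vk k (Sum.inr j)) =
            Matrix.vecMul (Pi.single k (1 : Polynomial K)) (P * D) := by
          funext j; rfl
        rw [h1, h2, sub_self]
      have hmem : ∀ k, ∃ c : Fin m → Polynomial K, (∑ i, c i • N i) = vk k := by
        intro k
        exact (Submodule.mem_span_range_iff_exists_fun _).mp ((hspan (vk k)).mp (hvknull k))
      choose c hc using hmem
      set V : Matrix (Fin m) (Fin m) (Polynomial K) := Matrix.of c with hVdef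
      have hVU : V * U = 1 := by
        apply Matrix.ext
        intro k j
        have h1 : (V * U) k j = Matrix.vecMul (c k) U j := Aux12.mul_apply_vecMul _ _ k j
        have h2 : Matrix.vecMul (c k) N (Sum.inl j) = vk k (Sum.inl j) := by
          rw [← hsum (c k) (Sum.inl j), hc k]
        have h2' : Matrix.vecMul (c k) U j =
            (Pi.single k (1 : Polynomial K) : Fin m → Polynomial K) j := by
          rw [hN, Matrix.vecMul_fromCols, Sum.elim_inl] at h2
          exact h2
        rw [h1, h2', Matrix.one_apply, Pi.single_apply]
        simp [eq_comm]
      exact ⟨⟨U, V, mul_eq_one_comm.mp hVU, hVU⟩, rfl⟩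
    refine ⟨hUnit, hRUP, ?_⟩
    show (leadMatG (fun i => s i + t i) R).rank = Fintype.card (Fin m)
    rw [← Aux12.rank_lm_eq s t d P U R hd' hA hRUP]
    exact hred
end
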